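/- arXiv:1403.2675 — 7 statements merged into one kernel-verified Lean document; each statement's English description precedes it below -/
import Mathlib

section
/- Let F be a finite abelian subgroup of PU(n) such that the only X ∈ su(n) satisfying AXA⁻¹ = X for every A ∈ U(n) representing an element of F is X = 0. Then the commutator pairing m on F is nondegenerate: if x ∈ F satisfies m(x,y) = 1 for all y ∈ F, then x = 1. -/
/-!
If `x = [A]` pairs trivially with `F`, then `A` commutes with every representative of every
element of `F`. The representatives form a star-closed set, so `A` lies in its commutant `C`, a
star subalgebra of matrices. By hypothesis `C` contains no nonzero traceless skew-Hermitian
matrix; removing the trace part of a skew-Hermitian element of `C` therefore leaves `0`, and since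
every element of `C` is a combination of skew-Hermitian ones, `C` consists of scalars. A unitary
scalar matrix lies in `Z_n`, so `x = 1`.
-/

open Matrix

noncomputable section

/-- The unitary group `U(ι)` of complex unitary matrices indexed by `ι`. -/
abbrev UG (ι : Type) [Fintype ι] [DecidableEq ι] := Matrix.unitaryGroup ι ℂ

variable (ι : Type) [Fintype ι] [DecidableEq ι]

/-- The central subgroup `Z_n = {λ I : |λ| = 1}` of scalar unitary matrices. -/
def scalarSG : Subgroup (UG ι) where
  carrier := {A | ∃ c : ℂ, ‖c‖ = 1 ∧ (A : Matrix ι ι ℂ) = c • (1 : Matrix ι ι ℂ)}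
  one_mem' := ⟨1, by simp, by simp⟩
  mul_mem' := by
    rintro A B ⟨a, ha, hA⟩ ⟨b, hb, hB⟩
    exact ⟨a * b, by simp [ha, hb], by
      simp only [Matrix.UnitaryGroup.mul_val, hA, hB, smul_mul_smul_comm, mul_one]⟩
  inv_mem' := by
    rintro A ⟨a, ha, hA⟩
    refine ⟨star a, by simpa using ha, ?_⟩
    have : ((A⁻¹ : UG ι) : Matrix ι ι ℂ) = star (A : Matrix ι ι ℂ) :=
      Matrix.UnitaryGroup.inv_val A
    rw [this, hA]
    simp [Matrix.star_eq_conjTranspose, Matrix.conjTranspose_smul]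

instance scalarSG_normal : (scalarSG ι).Normal := by
  constructor
  rintro A ⟨a, ha, hA⟩ g
  refine ⟨a, ha, ?_⟩
  have h1 : ((g * A * g⁻¹ : UG ι) : Matrix ι ι ℂ)
      = (g : Matrix ι ι ℂ) * (A : Matrix ι ι ℂ) * ((g⁻¹ : UG ι) : Matrix ι ι ℂ) := rfl
  rw [h1, hA]
  have h2 : (g : Matrix ι ι ℂ) * ((g⁻¹ : UG ι) : Matrix ι ι ℂ) = 1 := by
    have := Matrix.UnitaryGroup.mul_val g g⁻¹
    rw [mul_inv_cancel] at this
    simpa using this.symm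
  calc (g : Matrix ι ι ℂ) * (a • (1 : Matrix ι ι ℂ)) * ((g⁻¹ : UG ι) : Matrix ι ι ℂ)
      = a • ((g : Matrix ι ι ℂ) * ((g⁻¹ : UG ι) : Matrix ι ι ℂ)) := by
        simp [mul_smul_comm, smul_mul_assoc]
    _ = a • (1 : Matrix ι ι ℂ) := by rw [h2]

/-- The projective unitary group `PU(ι) = U(ι)/Z`. -/
abbrev PU := UG ι ⧸ scalarSG ι

variable {ι}

namespace Matrix

theorem exists_eq_smul_one_of_conjTranspose_eq_neg {C : StarSubalgebra ℂ (Matrix ι ι ℂ)}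
    (hC : ∀ X ∈ C, Xᴴ = -X → X.trace = 0 → X = 0) {N : Matrix ι ι ℂ} (hN : N ∈ C)
    (hskew : Nᴴ = -N) : ∃ c : ℂ, N = c • 1 := by
  set c : ℂ := N.trace / Fintype.card ι
  have htrace : c * Fintype.card ι = N.trace := by
    refine div_mul_cancel_of_imp fun hcard => ?_
    have : IsEmpty ι := Fintype.card_eq_zero_iff.mp (by exact_mod_cast hcard)
    simp [Matrix.trace]
  have hc : star c = -c := by
    have := congrArg Matrix.trace hskew
    rw [trace_conjTranspose, trace_neg] at this
    simp [c, this, neg_div]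
  refine ⟨c, sub_eq_zero.mp (hC _ ?_ ?_ ?_)⟩
  · exact C.sub_mem hN (C.smul_mem C.one_mem c)
  · rw [conjTranspose_sub, conjTranspose_smul, conjTranspose_one, hskew, hc, neg_smul, neg_sub_neg,
      neg_sub]
  · rw [trace_sub, trace_smul, trace_one, smul_eq_mul, htrace, sub_self]

theorem exists_eq_smul_one_of_mem_starSubalgebra {C : StarSubalgebra ℂ (Matrix ι ι ℂ)}
    (hC : ∀ X ∈ C, Xᴴ = -X → X.trace = 0 → X = 0) {N : Matrix ι ι ℂ} (hN : N ∈ C) :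
    ∃ c : ℂ, N = c • 1 := by
  have hNH : Nᴴ ∈ C := star_mem hN
  obtain ⟨a, ha⟩ := exists_eq_smul_one_of_conjTranspose_eq_neg hC (C.sub_mem hN hNH)
    (by rw [conjTranspose_sub, conjTranspose_conjTranspose, neg_sub])
  obtain ⟨b, hb⟩ := exists_eq_smul_one_of_conjTranspose_eq_neg hC
    (C.smul_mem (C.add_mem hN hNH) Complex.I)
    (by simp only [conjTranspose_smul, conjTranspose_add, conjTranspose_conjTranspose,
      Complex.star_def, Complex.conj_I]; module)
  refine ⟨(a - Complex.I * b) / 2, ?_⟩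
  have hherm : N + Nᴴ = (-Complex.I * b) • 1 := by
    rw [mul_smul, ← hb, smul_smul, neg_mul, Complex.I_mul_I, neg_neg, one_smul]
  calc N = (2 : ℂ)⁻¹ • ((N - Nᴴ) + (N + Nᴴ)) := by module
    _ = ((a - Complex.I * b) / 2) • 1 := by rw [ha, hherm]; module

end Matrix

theorem mem_scalarSG_of_coe_eq_smul_one {A : UG ι} {c : ℂ}
    (hA : (A : Matrix ι ι ℂ) = c • 1) :
    A ∈ scalarSG ι := by
  rcases isEmpty_or_nonempty ι with hι | ⟨⟨i⟩⟩
  · exact ⟨1, norm_one, Subsingleton.elim _ _⟩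
  refine ⟨c, ?_, hA⟩
  have h := congrFun₂ (Matrix.UnitaryGroup.star_mul_self A) i i
  rw [hA] at h
  simp only [star_smul, RCLike.star_def, star_one, Algebra.mul_smul_comm, mul_one,
    Matrix.smul_apply, one_apply_eq, smul_eq_mul] at h
  rw [Complex.mul_conj', ← Complex.ofReal_pow, Complex.ofReal_eq_one] at h
  exact (pow_eq_one_iff_of_nonneg (norm_nonneg c) two_ne_zero).mp h

theorem commute_of_coe_commutator_eq_one {A B : UG ι}
    (h : ((A * B * A⁻¹ * B⁻¹ : UG ι) : Matrix ι ι ℂ) = 1) :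
    Commute (A : Matrix ι ι ℂ) B :=
  (commutatorElement_eq_one_iff_commute.mp (Subtype.ext h)).map (unitaryGroup ι ℂ).subtype

def matrixLifts (F : Subgroup (PU ι)) : Set (Matrix ι ι ℂ) :=
  (↑) '' {B : UG ι | (B : PU ι) ∈ F}

theorem mem_centralizer_matrixLifts {F : Subgroup (PU ι)} {A : UG ι}
    (h : ∀ B : UG ι, (B : PU ι) ∈ F → Commute (A : Matrix ι ι ℂ) B) :
    (A : Matrix ι ι ℂ) ∈ StarSubalgebra.centralizer ℂ (matrixLifts F) := by
  rw [StarSubalgebra.mem_centralizer_iff]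
  rintro _ ⟨B, hB, rfl⟩
  refine ⟨(h B hB).symm.eq, ?_⟩
  rw [← Matrix.UnitaryGroup.inv_val]
  exact (h B⁻¹ (by simpa using inv_mem (show (B : PU ι) ∈ F from hB))).symm.eq

theorem conj_eq_of_mem_centralizer_matrixLifts {F : Subgroup (PU ι)} {X : Matrix ι ι ℂ}
    (hX : X ∈ StarSubalgebra.centralizer ℂ (matrixLifts F)) {B : UG ι}
    (hB : (B : PU ι) ∈ F) :
    (B : Matrix ι ι ℂ) * X * (B : Matrix ι ι ℂ)⁻¹ = X := by
  rw [StarSubalgebra.mem_centralizer_iff] at hX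
  rw [(hX _ ⟨B, hB, rfl⟩).1,
    mul_nonsing_inv_cancel_right _ _ (Matrix.UnitaryGroup.det_isUnit B)]

theorem commutator_pairing_nondegenerate_general (n : ℕ)
    (F : Subgroup (PU (Fin n)))
    (hcond : ∀ X : Matrix (Fin n) (Fin n) ℂ, Xᴴ = -X → X.trace = 0 →
      (∀ A : UG (Fin n), (QuotientGroup.mk A : PU (Fin n)) ∈ F →
        (A : Matrix (Fin n) (Fin n) ℂ) * X * (A : Matrix (Fin n) (Fin n) ℂ)⁻¹ = X) →
      X = 0) :
    ∀ x ∈ F,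
      (∀ y ∈ F, ∀ A B : UG (Fin n),
        (QuotientGroup.mk A : PU (Fin n)) = x → (QuotientGroup.mk B : PU (Fin n)) = y →
        ((A * B * A⁻¹ * B⁻¹ : UG (Fin n)) : Matrix (Fin n) (Fin n) ℂ) = 1) →
      x = 1 := by
  intro x _ hpair
  obtain ⟨A, rfl⟩ := QuotientGroup.mk_surjective x
  have hcomm (B : UG (Fin n)) (hB : (B : PU (Fin n)) ∈ F) :
      Commute (A : Matrix (Fin n) (Fin n) ℂ) B :=
    commute_of_coe_commutator_eq_one (hpair _ hB A B rfl rfl)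
  obtain ⟨c, hc⟩ := Matrix.exists_eq_smul_one_of_mem_starSubalgebra
    (fun X hX hskew htrace => hcond X hskew htrace fun B hB =>
      conj_eq_of_mem_centralizer_matrixLifts hX hB)
    (mem_centralizer_matrixLifts hcomm)
  exact (QuotientGroup.eq_one_iff _).2 (mem_scalarSG_of_coe_eq_smul_one hc)

/-- If `F` is a finite abelian subgroup of `PU(n)` such that the only
`X ∈ su(n)` fixed by conjugation by every representative of every element of `F` is `X = 0`,
then the commutator pairing on `F` is nondegenerate. -/
theorem commutator_pairing_nondegenerate (n : ℕ) (hn : 1 ≤ n)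
    (F : Subgroup (PU (Fin n)))
    (habel : ∀ x ∈ F, ∀ y ∈ F, x * y = y * x)
    (hfin : (F : Set (PU (Fin n))).Finite)
    (hcond : ∀ X : Matrix (Fin n) (Fin n) ℂ, Xᴴ = -X → X.trace = 0 →
      (∀ A : UG (Fin n), (QuotientGroup.mk A : PU (Fin n)) ∈ F →
        (A : Matrix (Fin n) (Fin n) ℂ) * X * (A : Matrix (Fin n) (Fin n) ℂ)⁻¹ = X) →
      X = 0) :
    ∀ x ∈ F,
      (∀ y ∈ F, ∀ A B : UG (Fin n),
        (QuotientGroup.mk A : PU (Fin n)) = x → (QuotientGroup.mk B : PU (Fin n)) = y →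
        ((A * B * A⁻¹ * B⁻¹ : UG (Fin n)) : Matrix (Fin n) (Fin n) ℂ) = 1) →
      x = 1 :=
  commutator_pairing_nondegenerate_general n F hcond

end
end

section
/- Let F be a nontrivial finite abelian group and m : F × F → U(1) an antisymmetric bimultiplicative function that is nondegenerate. Let n₁ be the maximal order of the roots of unity m(x,y) over all x, y ∈ F. Then: (i) m(x,y)^{n₁} = 1 for all x, y ∈ F; (ii) for any x₁, y₁ ∈ F such that m(x₁,y₁) has order exactly n₁, both x₁ and y₁ have order n₁, the subgroup ⟨x₁,y₁⟩ is isomorphic to ℤ/n₁ℤ × ℤ/n₁ℤ, and F is the internal direct product of ⟨x₁,y₁⟩ and F₁ = {x ∈ F : m(x,x₁) = m(x,y₁) = 1}, i.e. F = ⟨x₁,y₁⟩ × F₁. -/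
/-!
Lift `m` to a bimultiplicative pairing `B` with values in `ℂˣ`. Nondegeneracy makes every
`x` have the same order as some `B x y` (the exponent of the image of `B x` kills `x`),
so the maximal order `n₁` is the exponent of `F`. For `B x₁ y₁ = ζ` of order `n₁`, the map
`z ↦ (B z y₁, B x₁ z)` sends `x₁ ^ i * y₁ ^ j` to `(ζ ^ i, ζ ^ j)`: it maps `⟨x₁, y₁⟩`
isomorphically onto `⟨ζ⟩ × ⟨ζ⟩`, and since every value of `B` is an `n₁`-th root of unity,
hence a power of `ζ`, this is its whole image. So `⟨x₁, y₁⟩` is a complement of its kernel,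
which is `F₁`.
-/

open Subgroup

noncomputable def Subgroup.equivMapOfDisjointKer {G N : Type*} [Group G] [Group N]
    (H : Subgroup G) (f : G →* N) (h : Disjoint H f.ker) : H ≃* H.map f :=
  (MonoidHom.ofInjective (f := f.domRestrict H) (by
    rwa [← MonoidHom.ker_eq_bot_iff, MonoidHom.ker_domRestrict, subgroupOf_eq_bot,
      disjoint_comm])).trans
    (MulEquiv.subgroupCongr (f.domRestrict_range H))

section Pairing

variable {F M : Type*} [CommGroup F]

def MonoidHom.ofBimul [CommMonoid M] (m : F → F → M) (map_one_left : ∀ y, m 1 y = 1)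
    (map_one_right : ∀ x, m x 1 = 1) (map_mul_left : ∀ x y z, m (x * y) z = m x z * m y z)
    (map_mul_right : ∀ x y z, m x (y * z) = m x y * m x z) : F →* F →* M where
  toFun x := ⟨⟨m x, map_one_right x⟩, map_mul_right x⟩
  map_one' := MonoidHom.ext map_one_left
  map_mul' x y := MonoidHom.ext (map_mul_left x y)

theorem exists_unitsPairing_of_alternating [DivisionCommMonoid M] (m : F → F → M)
    (hanti : ∀ x, m x x = 1) (hskew : ∀ x y, m x y = (m y x)⁻¹)
    (hbimul : ∀ x y z, m (x * y) z = m x z * m y z) :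
    ∃ B : F →* F →* Mˣ, ∀ x y, (B x y : M) = m x y := by
  have one_left (y : F) : m 1 y = 1 := by simpa [hanti] using (hbimul y 1 y).symm
  have mul_right (x y z : F) : m x (y * z) = m x y * m x z := by
    rw [hskew, hbimul, mul_inv, ← hskew, ← hskew]
  exact ⟨MonoidHom.toHomUnitsMulEquiv.toMonoidHom.comp
    (.ofBimul m one_left (fun x => by rw [hskew, one_left, inv_one]) hbimul mul_right),
    fun _ _ => rfl⟩

section CommGroup

variable [CommGroup M] (B : F →* F →* M)

theorem orderOf_pairing_dvd_left (x y : F) : orderOf (B x y) ∣ orderOf x :=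
  orderOf_map_dvd (B.flip y) x

theorem orderOf_pairing_dvd_right (x y : F) : orderOf (B x y) ∣ orderOf y :=
  orderOf_map_dvd (B x) y

theorem orderOf_pairing_dvd_exponent (x y : F) : orderOf (B x y) ∣ Monoid.exponent F :=
  (orderOf_pairing_dvd_left B x y).trans (Monoid.order_dvd_exponent x)

theorem exists_orderOf_pairing_eq_orderOf [Finite F] (hB : ∀ x, (∀ y, B x y = 1) → x = 1)
    (x : F) : ∃ y, orderOf (B x y) = orderOf x := by
  have : Finite (B x).range := .of_surjective _ (B x).rangeRestrict_surjective
  obtain ⟨⟨_, y, rfl⟩, hy⟩ :=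
    Monoid.exists_orderOf_eq_exponent (G := (B x).range) Monoid.ExponentExists.of_finite
  rw [← Subgroup.orderOf_coe] at hy
  refine ⟨y, (orderOf_pairing_dvd_left B x y).antisymm (orderOf_dvd_of_pow_eq_one (hB _ ?_))⟩
  intro z
  rw [map_pow, MonoidHom.pow_apply, hy]
  exact congrArg Subtype.val (Monoid.pow_exponent_eq_one (⟨B x z, z, rfl⟩ : (B x).range))

theorem exists_orderOf_pairing_eq_exponent [Finite F] (hB : ∀ x, (∀ y, B x y = 1) → x = 1) :
    ∃ x y, orderOf (B x y) = Monoid.exponent F := by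
  obtain ⟨x, hx⟩ := Monoid.exists_orderOf_eq_exponent (Monoid.ExponentExists.of_finite (G := F))
  obtain ⟨y, hy⟩ := exists_orderOf_pairing_eq_orderOf B hB x
  exact ⟨x, y, hy.trans hx⟩

theorem eq_exponent_of_max_orderOf_pairing [Finite F] (hB : ∀ x, (∀ y, B x y = 1) → x = 1)
    {n : ℕ} (hmax : ∃ x y, orderOf (B x y) = n) (hub : ∀ x y, orderOf (B x y) ≤ n) :
    n = Monoid.exponent F := by
  obtain ⟨x, y, rfl⟩ := hmax
  obtain ⟨x', y', h⟩ := exists_orderOf_pairing_eq_exponent B hB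
  exact (Nat.le_of_dvd (Nat.pos_of_ne_zero Monoid.exponent_ne_zero_of_finite)
    (orderOf_pairing_dvd_exponent B x y)).antisymm (h ▸ hub x' y')

theorem orderOf_left_eq_exponent {x y : F} (h : orderOf (B x y) = Monoid.exponent F) :
    orderOf x = Monoid.exponent F :=
  (Monoid.order_dvd_exponent x).antisymm (h ▸ orderOf_pairing_dvd_left B x y)

theorem orderOf_right_eq_exponent {x y : F} (h : orderOf (B x y) = Monoid.exponent F) :
    orderOf y = Monoid.exponent F :=
  (Monoid.order_dvd_exponent y).antisymm (h ▸ orderOf_pairing_dvd_right B x y)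

theorem pairing_swap (hB : ∀ x, B x x = 1) (x y : F) : B y x = (B x y)⁻¹ :=
  eq_inv_of_mul_eq_one_right (by simpa [hB] using hB (x * y))

/-- The entries are ordered so that `x₁ ↦ (B x₁ y₁, 1)` and `y₁ ↦ (1, B x₁ y₁)`. -/
def pairWith (x₁ y₁ : F) : F →* M × M := (B.flip y₁).prod (B x₁)

@[simp]
theorem pairWith_apply (x₁ y₁ z : F) : pairWith B x₁ y₁ z = (B z y₁, B x₁ z) := rfl

variable {B} (hB : ∀ x, B x x = 1) {x₁ y₁ : F}
include hB

theorem mem_ker_pairWith_iff {t : F} :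
    t ∈ (pairWith B x₁ y₁).ker ↔ B t x₁ = 1 ∧ B t y₁ = 1 := by
  rw [MonoidHom.mem_ker, pairWith_apply, Prod.mk_eq_one, pairing_swap B hB t x₁, inv_eq_one,
    and_comm]

theorem pairWith_zpow_mul_zpow (i j : ℤ) :
    pairWith B x₁ y₁ (x₁ ^ i * y₁ ^ j) = (B x₁ y₁ ^ i, B x₁ y₁ ^ j) := by
  simp [hB]

theorem map_closure_pairWith :
    (closure {x₁, y₁}).map (pairWith B x₁ y₁) = (zpowers (B x₁ y₁)).prod (zpowers (B x₁ y₁)) := by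
  ext ⟨a, b⟩
  simp only [mem_map, mem_closure_pair, mem_prod, mem_zpowers_iff]
  constructor
  · rintro ⟨_, ⟨i, j, rfl⟩, h⟩
    rw [pairWith_zpow_mul_zpow hB, Prod.mk.injEq] at h
    exact ⟨⟨i, h.1⟩, ⟨j, h.2⟩⟩
  · rintro ⟨⟨i, rfl⟩, ⟨j, rfl⟩⟩
    exact ⟨_, ⟨i, j, rfl⟩, pairWith_zpow_mul_zpow hB i j⟩

theorem disjoint_closure_ker_pairWith (hx : orderOf x₁ = orderOf (B x₁ y₁))
    (hy : orderOf y₁ = orderOf (B x₁ y₁)) :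
    Disjoint (closure {x₁, y₁}) (pairWith B x₁ y₁).ker := by
  rw [disjoint_def]
  intro _ hw h
  obtain ⟨i, j, rfl⟩ := mem_closure_pair.1 hw
  rw [MonoidHom.mem_ker, pairWith_zpow_mul_zpow hB, Prod.mk_eq_one] at h
  have zpow_eq_one {g : F} (hg : orderOf g = orderOf (B x₁ y₁)) {k : ℤ}
      (hk : B x₁ y₁ ^ k = 1) : g ^ k = 1 := by
    rwa [← orderOf_dvd_iff_zpow_eq_one, hg, orderOf_dvd_iff_zpow_eq_one]
  rw [zpow_eq_one hx h.1, zpow_eq_one hy h.2, one_mul]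

theorem nonempty_closure_pair_mulEquiv (hx : orderOf x₁ = orderOf (B x₁ y₁))
    (hy : orderOf y₁ = orderOf (B x₁ y₁)) :
    Nonempty (closure ({x₁, y₁} : Set F) ≃*
      Multiplicative (ZMod (orderOf (B x₁ y₁))) × Multiplicative (ZMod (orderOf (B x₁ y₁)))) := by
  have e := zmodCyclicMulEquiv (isCyclic_zpowers (B x₁ y₁))
  rw [Nat.card_zpowers] at e
  exact ⟨(equivMapOfDisjointKer _ _ (disjoint_closure_ker_pairWith hB hx hy)).trans <|
    (MulEquiv.subgroupCongr (map_closure_pairWith hB)).trans <|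
    (prodEquiv _ _).trans (e.symm.prodCongr e.symm)⟩

end CommGroup

section Domain

variable {R : Type*} [CommRing R] [IsDomain R] [Finite F] {B : F →* F →* Rˣ} {x₁ y₁ : F}

theorem pairing_mem_zpowers (hζ : orderOf (B x₁ y₁) = Monoid.exponent F) (x y : F) :
    B x y ∈ zpowers (B x₁ y₁) := by
  have hprim : IsPrimitiveRoot (B x₁ y₁) (Monoid.exponent F) := hζ ▸ .orderOf _
  rw [hprim.zpowers_eq, mem_rootsOfUnity, ← orderOf_dvd_iff_pow_eq_one]
  exact orderOf_pairing_dvd_exponent B x y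

theorem codisjoint_closure_ker_pairWith (hB : ∀ x, B x x = 1)
    (hζ : orderOf (B x₁ y₁) = Monoid.exponent F) :
    Codisjoint (closure {x₁, y₁}) (pairWith B x₁ y₁).ker := by
  refine map_eq_range_iff.1 (le_antisymm (map_le_range _ _) ?_)
  rw [map_closure_pairWith hB]
  rintro _ ⟨z, rfl⟩
  exact ⟨pairing_mem_zpowers hζ z y₁, pairing_mem_zpowers hζ x₁ z⟩

theorem exists_mem_closure_mul_pairing_eq_one (hB : ∀ x, B x x = 1)
    (hζ : orderOf (B x₁ y₁) = Monoid.exponent F) (z : F) :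
    ∃ w ∈ closure {x₁, y₁}, ∃ t, B t x₁ = 1 ∧ B t y₁ = 1 ∧ z = w * t := by
  obtain ⟨w, hw, t, ht, rfl⟩ :=
    mem_sup.1 ((codisjoint_closure_ker_pairWith hB hζ).eq_top ▸ mem_top z)
  obtain ⟨h₁, h₂⟩ := (mem_ker_pairWith_iff hB).1 ht
  exact ⟨w, hw, t, h₁, h₂, rfl⟩

end Domain

end Pairing

theorem symplectic_splitting_general (F : Type) [CommGroup F] [Fintype F]
    (m : F → F → ℂ)
    (hanti : ∀ x, m x x = 1)
    (hskew : ∀ x y, m x y = (m y x)⁻¹)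
    (hbimul : ∀ x y z, m (x * y) z = m x z * m y z)
    (hnondeg : ∀ x, (∀ y, m x y = 1) → x = 1)
    (n₁ : ℕ)
    (hmax : ∃ x y, orderOf (m x y) = n₁)
    (hub : ∀ x y, orderOf (m x y) ≤ n₁) :
    (∀ x y, m x y ^ n₁ = 1) ∧
    ∀ x₁ y₁ : F, orderOf (m x₁ y₁) = n₁ →
      orderOf x₁ = n₁ ∧ orderOf y₁ = n₁ ∧
      Nonempty ((Subgroup.closure ({x₁, y₁} : Set F)) ≃*
        Multiplicative (ZMod n₁) × Multiplicative (ZMod n₁)) ∧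
      (∀ z : F, ∃ w ∈ Subgroup.closure ({x₁, y₁} : Set F),
        ∃ t : F, m t x₁ = 1 ∧ m t y₁ = 1 ∧ z = w * t) ∧
      (∀ w ∈ Subgroup.closure ({x₁, y₁} : Set F), m w x₁ = 1 → m w y₁ = 1 → w = 1) := by
  obtain ⟨B, hBm⟩ := exists_unitsPairing_of_alternating m hanti hskew hbimul
  simp only [← hBm, Units.val_eq_one, orderOf_units, ← Units.val_pow_eq_pow_val]
    at hanti hnondeg hmax hub ⊢
  obtain rfl := eq_exponent_of_max_orderOf_pairing B hnondeg hmax hub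
  refine ⟨fun x y => orderOf_dvd_iff_pow_eq_one.1 (orderOf_pairing_dvd_exponent B x y),
    fun x₁ y₁ hζ => ?_⟩
  have hx := orderOf_left_eq_exponent B hζ
  have hy := orderOf_right_eq_exponent B hζ
  have hdisj := disjoint_closure_ker_pairWith hanti (hx.trans hζ.symm) (hy.trans hζ.symm)
  refine ⟨hx, hy, ?_, exists_mem_closure_mul_pairing_eq_one hanti hζ,
    fun w hw h₁ h₂ => disjoint_def.1 hdisj hw ((mem_ker_pairWith_iff hanti).2 ⟨h₁, h₂⟩)⟩
  rw [← hζ]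
  exact nonempty_closure_pair_mulEquiv hanti (hx.trans hζ.symm) (hy.trans hζ.symm)

/-- Let `F` be a nontrivial finite abelian group and
`m : F × F → U(1)` a nondegenerate antisymmetric bimultiplicative function, and let `n₁` be
the maximal order of the values `m x y` (which are roots of unity). Then `m x y ^ n₁ = 1`
for all `x y`, and for any `x₁ y₁` with `m x₁ y₁` of order exactly `n₁`: `x₁` and `y₁` have
order `n₁`, `⟨x₁, y₁⟩ ≅ ℤ/n₁ℤ × ℤ/n₁ℤ`, and `F` is the internal direct product of
`⟨x₁, y₁⟩` and `F₁ = {x : m x x₁ = m x y₁ = 1}`. -/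
theorem symplectic_splitting (F : Type) [CommGroup F] [Fintype F] [Nontrivial F]
    (m : F → F → ℂ)
    (hnorm : ∀ x y, ‖m x y‖ = 1)
    (hanti : ∀ x, m x x = 1)
    (hskew : ∀ x y, m x y = (m y x)⁻¹)
    (hbimul : ∀ x y z, m (x * y) z = m x z * m y z)
    (hnondeg : ∀ x, (∀ y, m x y = 1) → x = 1)
    (n₁ : ℕ)
    (hmax : ∃ x y, orderOf (m x y) = n₁)
    (hub : ∀ x y, orderOf (m x y) ≤ n₁) :
    (∀ x y, m x y ^ n₁ = 1) ∧
    ∀ x₁ y₁ : F, orderOf (m x₁ y₁) = n₁ →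
      orderOf x₁ = n₁ ∧ orderOf y₁ = n₁ ∧
      Nonempty ((Subgroup.closure ({x₁, y₁} : Set F)) ≃*
        Multiplicative (ZMod n₁) × Multiplicative (ZMod n₁)) ∧
      (∀ z : F, ∃ w ∈ Subgroup.closure ({x₁, y₁} : Set F),
        ∃ t : F, m t x₁ = 1 ∧ m t y₁ = 1 ∧ z = w * t) ∧
      (∀ w ∈ Subgroup.closure ({x₁, y₁} : Set F), m w x₁ = 1 → m w y₁ = 1 → w = 1) :=
  symplectic_splitting_general F m hanti hskew hbimul hnondeg n₁ hmax hub
end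

section
/- Let F be a finite abelian group and m : F × F → U(1) an antisymmetric bimultiplicative function that is nondegenerate. Then there exist an integer s ≥ 0 and integers n₁ ≥ n₂ ≥ … ≥ n_s ≥ 2 with n_{i+1} | n_i for 1 ≤ i ≤ s−1, together with a group isomorphism φ : F → ∏_{i=1}^{s} (ℤ/n_iℤ × ℤ/n_iℤ) such that m(x,y) = ∏_{i=1}^{s} e^{2πi(a_i d_i − b_i c_i)/n_i} whenever φ(x) = ((a_i,b_i))_i and φ(y) = ((c_i,d_i))_i. In particular |F| = (n₁n₂⋯n_s)². -/
/-!
Induction on `|F|`. Let `N` be the exponent of `F` and `a` an element of order `N`. The image of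
the character `m a ·` is a finite subgroup of `ℂˣ`, hence the group of `d`-th roots of unity for
its order `d`; as `a ^ d` pairs trivially with everything, `N ∣ d`, so `m a b = e^{2πi/N}` for
some `b`. The discrete logarithms `x ↦ (log m x b, log m a x) ∈ (ℤ/N)²` form a homomorphism split
by `(u, v) ↦ a ^ u * b ^ v`, whence `F ≃* (ℤ/N)² × K` with `K` its kernel, and `m` becomes the
standard pairing on `(ℤ/N)²` times its restriction to `K`. That restriction is again
nondegenerate and the invariants of `K` divide `N`, so the recursion on `K` gives the rest.
-/

open Function ZMod

abbrev ZModPair (N : ℕ) : Type := Multiplicative (ZMod N) × Multiplicative (ZMod N)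

def symplecticForm {N : ℕ} (p q : ZModPair N) : ZMod N :=
  p.1.toAdd * q.2.toAdd - p.2.toAdd * q.1.toAdd

noncomputable def stdPairing (N : ℕ) (p q : ZModPair N) : ℂ :=
  Complex.exp (2 * Real.pi * Complex.I *
    ((p.1.toAdd.val : ℂ) * (q.2.toAdd.val : ℂ) - (p.2.toAdd.val : ℂ) * (q.1.toAdd.val : ℂ)) /
      (N : ℂ))

lemma symplecticForm_one_right {N : ℕ} (p : ZModPair N) : symplecticForm p 1 = 0 := by
  simp [symplecticForm]

lemma symplecticForm_one_left {N : ℕ} (q : ZModPair N) : symplecticForm 1 q = 0 := by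
  simp [symplecticForm]

lemma stdPairing_eq_stdAddChar {N : ℕ} [NeZero N] (p q : ZModPair N) :
    stdPairing N p q = stdAddChar (symplecticForm p q) := by
  have : symplecticForm p q =
      ((p.1.toAdd.val * q.2.toAdd.val - p.2.toAdd.val * q.1.toAdd.val : ℤ) : ZMod N) := by
    simp [symplecticForm]
  rw [this, stdAddChar_coe, stdPairing]
  push_cast
  rfl

lemma ZMod.exists_stdAddChar_eq {N : ℕ} [NeZero N] {z : ℂ} (hz : z ^ N = 1) :
    ∃ k : ZMod N, stdAddChar k = z := by
  obtain ⟨i, -, rfl⟩ := (Complex.isPrimitiveRoot_exp N (NeZero.ne N)).eq_pow_of_pow_eq_one hz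
  refine ⟨i, ?_⟩
  rw [← Int.cast_natCast, stdAddChar_coe, ← Complex.exp_nat_mul]
  congr 1
  push_cast
  ring

lemma ZMod.injective_stdAddChar_toAdd {N : ℕ} [NeZero N] :
    Injective fun u : Multiplicative (ZMod N) => stdAddChar u.toAdd :=
  injective_stdAddChar.comp Multiplicative.toAdd.injective

lemma exists_monoidHom_stdAddChar_eq {F : Type*} [Monoid F] {N : ℕ} [NeZero N] (χ : F →* ℂ)
    (hχ : ∀ x, χ x ^ N = 1) :
    ∃ f : F →* Multiplicative (ZMod N), ∀ x, stdAddChar (f x).toAdd = χ x := by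
  choose k hk using fun x => ZMod.exists_stdAddChar_eq (hχ x)
  have hk_one : k 1 = 0 := injective_stdAddChar (by rw [hk, map_one, AddChar.map_zero_eq_one])
  have hk_mul (x y : F) : k (x * y) = k x + k y :=
    injective_stdAddChar (by rw [hk, map_mul, AddChar.map_add_eq_mul, hk, hk])
  exact ⟨⟨⟨fun x => .ofAdd (k x), by simp [hk_one]⟩, fun x y => by simp [hk_mul]⟩, hk⟩

def zmodPowHom {G : Type*} [Monoid G] {N : ℕ} [NeZero N] (x : G) (hx : x ^ N = 1) :
    Multiplicative (ZMod N) →* G where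
  toFun u := x ^ u.toAdd.val
  map_one' := by simp
  map_mul' u v := by
    rw [toAdd_mul, ZMod.val_add, ← pow_mod_orderOf,
      Nat.mod_mod_of_dvd _ (orderOf_dvd_of_pow_eq_one hx), pow_mod_orderOf, pow_add]

def zmodPairPowHom {G : Type*} [CommMonoid G] {N : ℕ} [NeZero N] {a b : G} (ha : a ^ N = 1)
    (hb : b ^ N = 1) : ZModPair N →* G :=
  (zmodPowHom a ha).coprod (zmodPowHom b hb)

def MonoidHom.prodKerMulEquiv {F P : Type*} [CommGroup F] [Group P] (π : F →* P) (σ : P →* F)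
    (h : LeftInverse π σ) : F ≃* P × π.ker where
  toFun x := (π x, ⟨x / σ (π x), by simp [h (π x)]⟩)
  invFun p := σ p.1 * p.2
  left_inv x := mul_div_cancel _ _
  right_inv := fun ⟨p, k, hk⟩ => by
    have hk' : π k = 1 := hk
    ext <;> simp [h p, hk']
  map_mul' x y := by
    ext <;> simp [mul_div_mul_comm]

@[simp]
lemma MonoidHom.prodKerMulEquiv_symm_apply {F P : Type*} [CommGroup F] [Group P] (π : F →* P)
    (σ : P →* F) (h : LeftInverse π σ) (p : P × π.ker) :
    (π.prodKerMulEquiv σ h).symm p = σ p.1 * p.2 :=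
  rfl

def Fin.consMulEquiv {s : ℕ} (G : Fin (s + 1) → Type*) [∀ i, Mul (G i)] :
    G 0 × (∀ i : Fin s, G i.succ) ≃* ∀ i, G i :=
  { Fin.consEquiv G with
    map_mul' := fun p q => by
      ext i
      cases i using Fin.cases <;> rfl }

lemma Fin.cons_dvd_cons_of_le {s N : ℕ} {n : Fin s → ℕ} (hN : ∀ i, n i ∣ N)
    (hn : ∀ i j, i ≤ j → n j ∣ n i) :
    ∀ i j, i ≤ j →
      (Fin.cons N n : Fin (s + 1) → ℕ) j ∣ (Fin.cons N n : Fin (s + 1) → ℕ) i := by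
  intro i j hij
  cases j using Fin.cases with
  | zero => rw [Fin.le_zero_iff.1 hij]
  | succ j =>
    cases i using Fin.cases with
    | zero => exact hN j
    | succ i => exact hn i j (Fin.succ_le_succ_iff.1 hij)

lemma Nat.card_pi_zmodPair {s : ℕ} (n : Fin s → ℕ) :
    Nat.card (∀ i, ZModPair (n i)) = (∏ i, n i) ^ 2 := by
  simp [Nat.card_pi, Nat.card_prod, Nat.card_congr Multiplicative.toAdd, sq,
    Finset.prod_mul_distrib]

structure IsAlternatingPairing {F : Type*} [CommGroup F] (m : F → F → ℂ) : Prop where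
  apply_self (x : F) : m x x = 1
  apply_swap (x y : F) : m x y = (m y x)⁻¹
  map_mul_left (x y z : F) : m (x * y) z = m x z * m y z

namespace IsAlternatingPairing

variable {F : Type*} [CommGroup F] {m : F → F → ℂ} (hm : IsAlternatingPairing m)
include hm

lemma comp {G : Type*} [CommGroup G] (f : G →* F) :
    IsAlternatingPairing fun x y => m (f x) (f y) where
  apply_self x := hm.apply_self (f x)
  apply_swap x y := hm.apply_swap (f x) (f y)
  map_mul_left x y z := by simp only [map_mul, hm.map_mul_left]

lemma apply_one_left (y : F) : m 1 y = 1 := by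
  simpa [hm.apply_self] using (hm.map_mul_left y 1 y).symm

lemma map_mul_right (x y z : F) : m x (y * z) = m x y * m x z := by
  rw [hm.apply_swap, hm.map_mul_left, mul_inv, ← hm.apply_swap, ← hm.apply_swap]

def leftHom (y : F) : F →* ℂ where
  toFun x := m x y
  map_one' := hm.apply_one_left y
  map_mul' x z := hm.map_mul_left x z y

def rightHom (x : F) : F →* ℂ where
  toFun y := m x y
  map_one' := by rw [hm.apply_swap, hm.apply_one_left, inv_one]
  map_mul' := hm.map_mul_right x

lemma apply_pow_left (x y : F) (n : ℕ) : m (x ^ n) y = m x y ^ n :=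
  map_pow (hm.leftHom y) x n

lemma apply_pow_exponent (x y : F) : m x y ^ Monoid.exponent F = 1 := by
  rw [← hm.apply_pow_left, Monoid.pow_exponent_eq_one, hm.apply_one_left]

theorem exists_apply_eq [Finite F] (hnd : ∀ x, (∀ y, m x y = 1) → x = 1) (a : F) {z : ℂ}
    (hz : z ^ orderOf a = 1) : ∃ b, m a b = z := by
  set R := (hm.rightHom a).toHomUnits.range
  set d := Nat.card R
  have hR : ∀ y, m a y ^ d = 1 := fun y => by
    have h : (⟨_, y, rfl⟩ : R) ^ d = 1 := pow_card_eq_one'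
    have := congrArg (fun u : R => ((u : ℂˣ) : ℂ)) h
    simpa [rightHom] using this
  have hd : orderOf a ∣ d := orderOf_dvd_of_pow_eq_one <|
    hnd _ fun y => by rw [hm.apply_pow_left, hR]
  have : Finite R := .of_surjective _ (hm.rightHom a).toHomUnits.rangeRestrict_surjective
  have : NeZero d := ⟨Nat.card_pos.ne'⟩
  have hR_eq : R = rootsOfUnity d ℂ := by
    refine Subgroup.eq_of_le_of_card_ge ?_ (card_rootsOfUnity ℂ d)
    rintro _ ⟨y, rfl⟩
    rw [mem_rootsOfUnity, Units.ext_iff]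
    simpa [rightHom] using hR y
  have hzd : Units.ofPowEqOne z _ hz (orderOf_pos a).ne' ∈ R := by
    rw [hR_eq, mem_rootsOfUnity, Units.ext_iff]
    obtain ⟨c, hc⟩ := hd
    simp [hc, pow_mul]
  obtain ⟨b, hb⟩ := hzd
  exact ⟨b, congrArg Units.val hb⟩

section Splitting

variable {N : ℕ} [NeZero N] {a b : F} (ha : a ^ N = 1) (hb : b ^ N = 1)
  {π : F →* ZModPair N} (hπ₁ : ∀ x, stdAddChar (π x).1.toAdd = m x b)
  (hπ₂ : ∀ x, stdAddChar (π x).2.toAdd = m a x)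
include hπ₁ hπ₂

lemma apply_zmodPairPowHom_left (p : ZModPair N) (y : F) :
    m (zmodPairPowHom ha hb p) y = stdAddChar (symplecticForm p (π y)) := by
  have hby : m b y = stdAddChar (-(π y).1.toAdd) := by
    rw [AddChar.map_neg_eq_inv, hπ₁, ← hm.apply_swap]
  simp only [zmodPairPowHom, MonoidHom.coprod_apply, zmodPowHom, MonoidHom.coe_mk, OneHom.coe_mk,
    hm.map_mul_left, hm.apply_pow_left, ← hπ₂, hby, ← AddChar.map_nsmul_eq_pow,
    ← AddChar.map_add_eq_mul, symplecticForm, nsmul_eq_mul, ZMod.natCast_val, ZMod.cast_id', id]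
  rw [mul_neg, ← sub_eq_add_neg]

include ha hb

lemma leftInverse_zmodPairPowHom (hab : m a b = stdAddChar (1 : ZMod N)) :
    LeftInverse π (zmodPairPowHom ha hb) := by
  have hπa : π a = (.ofAdd 1, 1) := Prod.ext (injective_stdAddChar_toAdd (by simp [hπ₁, hab]))
    (injective_stdAddChar_toAdd (by simp [hπ₂, hm.apply_self]))
  have hπb : π b = (1, .ofAdd 1) :=
    Prod.ext (injective_stdAddChar_toAdd (by simp [hπ₁, hm.apply_self]))
      (injective_stdAddChar_toAdd (by simp [hπ₂, hab]))
  intro p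
  refine Prod.ext (injective_stdAddChar_toAdd ?_) (injective_stdAddChar_toAdd ?_)
  · dsimp only
    rw [hπ₁, hm.apply_zmodPairPowHom_left ha hb hπ₁ hπ₂, hπb]
    simp [symplecticForm]
  · dsimp only
    rw [hπ₂, hm.apply_swap, hm.apply_zmodPairPowHom_left ha hb hπ₁ hπ₂, hπa,
      ← AddChar.map_neg_eq_inv]
    simp [symplecticForm]

lemma apply_zmodPairPowHom_mul (hab : m a b = stdAddChar (1 : ZMod N)) (p q : ZModPair N)
    {k l : F} (hk : k ∈ π.ker) (hl : l ∈ π.ker) :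
    m (zmodPairPowHom ha hb p * k) (zmodPairPowHom ha hb q * l) =
      stdAddChar (symplecticForm p q) * m k l := by
  have hk₁ : m k (zmodPairPowHom ha hb q) = 1 := by
    rw [hm.apply_swap, hm.apply_zmodPairPowHom_left ha hb hπ₁ hπ₂, MonoidHom.mem_ker.1 hk,
      symplecticForm_one_right, AddChar.map_zero_eq_one, inv_one]
  rw [hm.map_mul_left, hm.apply_zmodPairPowHom_left ha hb hπ₁ hπ₂, map_mul,
    hm.leftInverse_zmodPairPowHom ha hb hπ₁ hπ₂ hab q, MonoidHom.mem_ker.1 hl, mul_one,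
    hm.map_mul_right, hk₁, one_mul]

end Splitting

theorem exists_mulEquiv_zmodPair_prod [Finite F] (hnd : ∀ x, (∀ y, m x y = 1) → x = 1) :
    ∃ (K : Subgroup F) (ψ : F ≃* ZModPair (Monoid.exponent F) × K),
      ∀ x y, m x y = stdAddChar (symplecticForm (ψ x).1 (ψ y).1) * m (ψ x).2 (ψ y).2 := by
  obtain ⟨a, ha⟩ := Monoid.exists_orderOf_eq_exponent (Monoid.ExponentExists.of_finite (G := F))
  have hζ : stdAddChar (1 : ZMod (Monoid.exponent F)) ^ orderOf a = 1 := by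
    rw [ha, ← AddChar.map_nsmul_eq_pow, nsmul_one, ZMod.natCast_self, AddChar.map_zero_eq_one]
  obtain ⟨b, hab⟩ := hm.exists_apply_eq hnd a hζ
  obtain ⟨π₁, hπ₁⟩ := exists_monoidHom_stdAddChar_eq (hm.leftHom b) (hm.apply_pow_exponent · b)
  obtain ⟨π₂, hπ₂⟩ := exists_monoidHom_stdAddChar_eq (hm.rightHom a) (hm.apply_pow_exponent a)
  have hpow := Monoid.pow_exponent_eq_one (G := F)
  let π := π₁.prod π₂
  have hπ₁' : ∀ x, stdAddChar (π x).1.toAdd = m x b := hπ₁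
  have hπ₂' : ∀ x, stdAddChar (π x).2.toAdd = m a x := hπ₂
  let ψ := π.prodKerMulEquiv _ (hm.leftInverse_zmodPairPowHom (hpow a) (hpow b) hπ₁' hπ₂' hab)
  refine ⟨_, ψ, fun x y => ?_⟩
  conv_lhs => rw [← ψ.symm_apply_apply x, ← ψ.symm_apply_apply y]
  rw [MonoidHom.prodKerMulEquiv_symm_apply, MonoidHom.prodKerMulEquiv_symm_apply,
    hm.apply_zmodPairPowHom_mul (hpow a) (hpow b) hπ₁' hπ₂' hab _ _ (ψ x).2.2 (ψ y).2.2]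

theorem exists_mulEquiv_pi_zmodPair [Finite F] (hnd : ∀ x, (∀ y, m x y = 1) → x = 1) :
    ∃ (s : ℕ) (n : Fin s → ℕ), (∀ i, 2 ≤ n i) ∧ (∀ i, n i ∣ Monoid.exponent F) ∧
      (∀ i j, i ≤ j → n j ∣ n i) ∧
      ∃ φ : F ≃* ∀ i, ZModPair (n i), ∀ x y, m x y = ∏ i, stdPairing (n i) (φ x i) (φ y i) := by
  induction h : Nat.card F using Nat.strong_induction_on generalizing F with
  | _ c ih =>
  rcases subsingleton_or_nontrivial F with hF | hF
  · let : Unique F := uniqueOfSubsingleton 1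
    refine ⟨0, Fin.elim0, nofun, nofun, nofun, .ofUnique, fun x y => ?_⟩
    simp [Subsingleton.elim x 1, hm.apply_one_left]
  obtain ⟨K, ψ, hψ⟩ := hm.exists_mulEquiv_zmodPair_prod hnd
  have hN : 2 ≤ Monoid.exponent F := Monoid.one_lt_exponent
  have hcard : Nat.card F = Monoid.exponent F ^ 2 * Nat.card K := by
    rw [Nat.card_congr ψ.toEquiv, Nat.card_prod, Nat.card_prod, Nat.card_congr Multiplicative.toAdd,
      Nat.card_zmod, sq]
  have hKnd : ∀ k : K, (∀ l : K, m k l = 1) → k = 1 := by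
    intro k hk
    have : ψ.symm (1, k) = 1 := hnd _ fun y => by
      rw [hψ, ψ.apply_symm_apply, symplecticForm_one_left, AddChar.map_zero_eq_one, one_mul]
      exact hk _
    simpa using congrArg (fun x => (ψ x).2) this
  obtain ⟨s, n, htwo, hexp, hdvd, φ, hφ⟩ := ih (Nat.card K)
    (h ▸ hcard ▸ lt_mul_of_one_lt_left Nat.card_pos (by nlinarith)) (hm.comp K.subtype) hKnd rfl
  have hexpK : ∀ i, n i ∣ Monoid.exponent F :=
    fun i => (hexp i).trans (Monoid.exponent_dvd_of_monoidHom K.subtype K.subtype_injective)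
  let n' : Fin (s + 1) → ℕ := Fin.cons (Monoid.exponent F) n
  refine ⟨s + 1, n', Fin.cases hN htwo, Fin.cases dvd_rfl hexpK, Fin.cons_dvd_cons_of_le hexpK hdvd,
    ψ.trans ((MulEquiv.prodCongr (.refl _) φ).trans (Fin.consMulEquiv fun i => ZModPair (n' i))),
    fun x y => ?_⟩
  rw [Fin.prod_univ_succ, hψ]
  exact congrArg₂ (· * ·) (stdPairing_eq_stdAddChar (ψ x).1 (ψ y).1).symm (hφ (ψ x).2 (ψ y).2)

end IsAlternatingPairing

theorem symplectic_structure_general (F : Type) [CommGroup F] [Fintype F]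
    (m : F → F → ℂ)
    (hanti : ∀ x, m x x = 1)
    (hskew : ∀ x y, m x y = (m y x)⁻¹)
    (hbimul : ∀ x y z, m (x * y) z = m x z * m y z)
    (hnondeg : ∀ x, (∀ y, m x y = 1) → x = 1) :
    ∃ (s : ℕ) (nn : Fin s → ℕ),
      (∀ i, 2 ≤ nn i) ∧
      Antitone nn ∧
      (∀ (i : ℕ) (h : i + 1 < s), nn ⟨i + 1, h⟩ ∣ nn ⟨i, Nat.lt_of_succ_lt h⟩) ∧
      ∃ φ : F ≃* ((i : Fin s) → Multiplicative (ZMod (nn i)) × Multiplicative (ZMod (nn i))),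
        (∀ x y : F,
          m x y = ∏ i : Fin s,
            Complex.exp (2 * Real.pi * Complex.I *
              (((Multiplicative.toAdd ((φ x) i).1).val : ℂ) *
                  ((Multiplicative.toAdd ((φ y) i).2).val : ℂ)
                - ((Multiplicative.toAdd ((φ x) i).2).val : ℂ) *
                  ((Multiplicative.toAdd ((φ y) i).1).val : ℂ)) / (nn i : ℂ))) ∧
        Fintype.card F = (∏ i : Fin s, nn i) ^ 2 := by
  obtain ⟨s, n, htwo, -, hdvd, φ, hφ⟩ :=
    IsAlternatingPairing.exists_mulEquiv_pi_zmodPair ⟨hanti, hskew, hbimul⟩ hnondeg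
  refine ⟨s, n, htwo, fun i j hij => Nat.le_of_dvd (by linarith [htwo i]) (hdvd i j hij),
    fun i h => hdvd _ _ (Fin.mk_le_mk.2 i.le_succ), φ, hφ, ?_⟩
  rw [← Nat.card_eq_fintype_card, Nat.card_congr φ.toEquiv, Nat.card_pi_zmodPair]

/-- A finite abelian group with a nondegenerate antisymmetric
bimultiplicative `U(1)`-valued function is isomorphic to `∏ᵢ (ℤ/nᵢℤ × ℤ/nᵢℤ)` with
`n₁ ≥ … ≥ n_s ≥ 2`, `n_{i+1} ∣ n_i`, via an isomorphism carrying `m` to the standard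
symplectic pairing `m(x,y) = ∏ᵢ e^{2πi(aᵢdᵢ−bᵢcᵢ)/nᵢ}`; in particular `|F| = (n₁⋯n_s)²`. -/
theorem symplectic_structure (F : Type) [CommGroup F] [Fintype F]
    (m : F → F → ℂ)
    (hnorm : ∀ x y, ‖m x y‖ = 1)
    (hanti : ∀ x, m x x = 1)
    (hskew : ∀ x y, m x y = (m y x)⁻¹)
    (hbimul : ∀ x y z, m (x * y) z = m x z * m y z)
    (hnondeg : ∀ x, (∀ y, m x y = 1) → x = 1) :
    ∃ (s : ℕ) (nn : Fin s → ℕ),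
      (∀ i, 2 ≤ nn i) ∧
      Antitone nn ∧
      (∀ (i : ℕ) (h : i + 1 < s), nn ⟨i + 1, h⟩ ∣ nn ⟨i, Nat.lt_of_succ_lt h⟩) ∧
      ∃ φ : F ≃* ((i : Fin s) → Multiplicative (ZMod (nn i)) × Multiplicative (ZMod (nn i))),
        (∀ x y : F,
          m x y = ∏ i : Fin s,
            Complex.exp (2 * Real.pi * Complex.I *
              (((Multiplicative.toAdd ((φ x) i).1).val : ℂ) *
                  ((Multiplicative.toAdd ((φ y) i).2).val : ℂ)
                - ((Multiplicative.toAdd ((φ x) i).2).val : ℂ) *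
                  ((Multiplicative.toAdd ((φ y) i).1).val : ℂ)) / (nn i : ℂ))) ∧
        Fintype.card F = (∏ i : Fin s, nn i) ^ 2 :=
  symplectic_structure_general F m hanti hskew hbimul hnondeg
end

section
/- Let m ≥ 1 and let H₂ = ⟨[I_{m,m}], [J'_m]⟩ be the subgroup of O(2m)/⟨−I⟩ generated by the classes of I_{m,m} and J'_m. Then the centralizer of H₂ in O(2m)/⟨−I⟩ equals {[diag(Y,Y)·Z] : Y ∈ O(m), Z ∈ {I_{2m}, I_{m,m}, J'_m, I_{m,m}J'_m}}; that is, it is the internal product Δ(O(m)/⟨−I⟩) × H₂, where Δ(Y) = diag(Y,Y). -/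
open Matrix

noncomputable section

/-- The orthogonal group `O(ι)` of real orthogonal matrices indexed by `ι`. -/
abbrev OG (ι : Type) [Fintype ι] [DecidableEq ι] := Matrix.orthogonalGroup ι ℝ

variable (ι : Type) [Fintype ι] [DecidableEq ι]

/-- `-I` as an element of the orthogonal group. -/
def negOne : OG ι := ⟨(-1 : Matrix ι ι ℝ), by
  rw [Matrix.mem_unitaryGroup_iff]; simp⟩

/-- The central subgroup `⟨-I⟩` of the orthogonal group. -/
def negSG : Subgroup (OG ι) := Subgroup.zpowers (negOne ι)

instance negSG_normal : (negSG ι).Normal := by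
  constructor
  intro x hx g
  obtain ⟨k, rfl⟩ := Subgroup.mem_zpowers_iff.mp hx
  have h2 : (g : Matrix ι ι ℝ) * ((g⁻¹ : OG ι) : Matrix ι ι ℝ) = 1 := by
    have := Matrix.UnitaryGroup.mul_val g g⁻¹
    rw [mul_inv_cancel] at this
    simpa using this.symm
  have hg : g * negOne ι * g⁻¹ = negOne ι := by
    apply Subtype.ext
    show (g : Matrix ι ι ℝ) * ((negOne ι : OG ι) : Matrix ι ι ℝ)
        * ((g⁻¹ : OG ι) : Matrix ι ι ℝ) = ((negOne ι : OG ι) : Matrix ι ι ℝ)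
    have hneg : ((negOne ι : OG ι) : Matrix ι ι ℝ) = -1 := rfl
    rw [hneg]
    calc (g : Matrix ι ι ℝ) * (-1 : Matrix ι ι ℝ) * ((g⁻¹ : OG ι) : Matrix ι ι ℝ)
        = -((g : Matrix ι ι ℝ) * ((g⁻¹ : OG ι) : Matrix ι ι ℝ)) := by first | (rw [mul_neg_one, neg_mul]) | simp [mul_assoc] | noncomm_ring
      _ = -1 := by rw [h2]
  have hmap : g * (negOne ι) ^ k * g⁻¹ = (g * negOne ι * g⁻¹) ^ k := by
    have := map_zpow (MulAut.conj g) (negOne ι) k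
    simpa [MulAut.conj_apply] using this
  rw [hmap, hg]
  exact Subgroup.zpow_mem _ (Subgroup.mem_zpowers _) k

/-- The projective orthogonal group `O(ι)/⟨-I⟩`. -/
abbrev PO := OG ι ⧸ negSG ι

/-- `I_{m,m} = diag(-I_m, I_m)`, on `ℝ^{2m} = ℝ^m ⊕ ℝ^m`. -/
def Imm (m : ℕ) : Matrix (Fin m ⊕ Fin m) (Fin m ⊕ Fin m) ℝ :=
  Matrix.fromBlocks (-1) 0 0 1

/-- `J'_m = [[0, I_m], [I_m, 0]]`, on `ℝ^{2m} = ℝ^m ⊕ ℝ^m`. -/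
def Jpm (m : ℕ) : Matrix (Fin m ⊕ Fin m) (Fin m ⊕ Fin m) ℝ :=
  Matrix.fromBlocks 0 1 1 0

/-- The subgroup `H₂ = ⟨[I_{m,m}], [J'_m]⟩` of `O(2m)/⟨-I⟩`. -/
def H2 (m : ℕ) : Subgroup (PO (Fin m ⊕ Fin m)) :=
  Subgroup.closure {x | ∃ U : OG (Fin m ⊕ Fin m),
    (QuotientGroup.mk U : PO (Fin m ⊕ Fin m)) = x ∧
    ((U : Matrix (Fin m ⊕ Fin m) (Fin m ⊕ Fin m) ℝ) = Imm m ∨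
     (U : Matrix (Fin m ⊕ Fin m) (Fin m ⊕ Fin m) ℝ) = Jpm m)}

/-! Two classes `[U]`, `[V]` commute in `O(n)/⟨-I⟩` exactly when `UV = ±VU`. In `m × m` blocks,
`U I_{m,m} = ± I_{m,m} U` forces `U` to be block diagonal or block antidiagonal, and
`U J'_m = ± J'_m U` forces its two nonzero blocks to agree up to sign. The four resulting shapes
are `diag(Y,Y)·Z` with `Z ∈ {I, I_{m,m}, J'_m, I_{m,m}J'_m}`, and `Y` is orthogonal because
`diag(Y,Y) = U Zᵀ` is. -/

instance Matrix.instIsAddTorsionFree {n p R : Type*} [AddGroup R] [IsAddTorsionFree R] :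
    IsAddTorsionFree (Matrix n p R) :=
  inferInstanceAs (IsAddTorsionFree (n → p → R))

lemma Matrix.fromBlocks_zero_mem_orthogonalGroup_iff {n o R : Type*} [Fintype n] [DecidableEq n]
    [Fintype o] [DecidableEq o] [CommRing R] (A : Matrix n n R) (D : Matrix o o R) :
    fromBlocks A 0 0 D ∈ orthogonalGroup (n ⊕ o) R ↔
      A ∈ orthogonalGroup n R ∧ D ∈ orthogonalGroup o R := by
  simp [mem_orthogonalGroup_iff, fromBlocks_transpose, fromBlocks_multiply, ← fromBlocks_one]

section ProjectiveOrthogonal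

variable {ι}

lemma mem_negSG_iff {x : OG ι} : x ∈ negSG ι ↔ x = 1 ∨ x = -1 := by
  refine ⟨?_, ?_⟩
  · rintro ⟨k, rfl⟩
    rcases Int.even_or_odd k with hk | hk
    · exact .inl hk.neg_one_zpow
    · exact .inr hk.neg_one_zpow
  · rintro (rfl | rfl)
    exacts [one_mem _, Subgroup.mem_zpowers _]

lemma mk_eq_mk_iff {a b : OG ι} :
    (QuotientGroup.mk a : PO ι) = QuotientGroup.mk b ↔
      (b : Matrix ι ι ℝ) = a ∨ (b : Matrix ι ι ℝ) = -a := by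
  rw [QuotientGroup.eq, mem_negSG_iff, inv_mul_eq_iff_eq_mul, inv_mul_eq_iff_eq_mul, mul_one,
    mul_neg_one, Subtype.ext_iff, Subtype.ext_iff]
  rfl

lemma mk_commute_iff {a b : OG ι} :
    Commute (QuotientGroup.mk a : PO ι) (QuotientGroup.mk b) ↔
      Commute (a : Matrix ι ι ℝ) b ∨ (a : Matrix ι ι ℝ) * b = -(b * a) := by
  rw [Commute, SemiconjBy, ← QuotientGroup.mk_mul, ← QuotientGroup.mk_mul, mk_eq_mk_iff,
    Submonoid.coe_mul, Submonoid.coe_mul]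
  exact or_congr eq_comm (eq_comm.trans neg_eq_iff_eq_neg)

end ProjectiveOrthogonal

section Blocks

variable {m : ℕ} (A B C D : Matrix (Fin m) (Fin m) ℝ)

lemma fromBlocks_mul_Imm : fromBlocks A B C D * Imm m = fromBlocks (-A) B (-C) D := by
  simp [Imm, fromBlocks_multiply]

lemma Imm_mul_fromBlocks : Imm m * fromBlocks A B C D = fromBlocks (-A) (-B) C D := by
  simp [Imm, fromBlocks_multiply]

lemma fromBlocks_mul_Jpm : fromBlocks A B C D * Jpm m = fromBlocks B A D C := by
  simp [Jpm, fromBlocks_multiply]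

lemma Jpm_mul_fromBlocks : Jpm m * fromBlocks A B C D = fromBlocks C D A B := by
  simp [Jpm, fromBlocks_multiply]

lemma fromBlocks_commute_Imm_iff : Commute (fromBlocks A B C D) (Imm m) ↔ B = 0 ∧ C = 0 := by
  rw [Commute, SemiconjBy, fromBlocks_mul_Imm, Imm_mul_fromBlocks, fromBlocks_inj]
  simp [neg_eq_self, self_eq_neg]

lemma fromBlocks_mul_Imm_eq_neg_iff :
    fromBlocks A B C D * Imm m = -(Imm m * fromBlocks A B C D) ↔ A = 0 ∧ D = 0 := by
  rw [fromBlocks_mul_Imm, Imm_mul_fromBlocks, fromBlocks_neg, fromBlocks_inj]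
  simp [neg_eq_self, self_eq_neg]

lemma fromBlocks_commute_Jpm_iff : Commute (fromBlocks A B C D) (Jpm m) ↔ C = B ∧ D = A := by
  rw [Commute, SemiconjBy, fromBlocks_mul_Jpm, Jpm_mul_fromBlocks, fromBlocks_inj]
  grind

lemma fromBlocks_mul_Jpm_eq_neg_iff :
    fromBlocks A B C D * Jpm m = -(Jpm m * fromBlocks A B C D) ↔ C = -B ∧ D = -A := by
  rw [fromBlocks_mul_Jpm, Jpm_mul_fromBlocks, fromBlocks_neg, fromBlocks_inj]
  grind

lemma fromBlocks_zero_zero_mul_Imm_mul_Jpm :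
    fromBlocks A 0 0 A * (Imm m * Jpm m) = fromBlocks 0 (-A) A 0 := by
  rw [← mul_assoc, fromBlocks_mul_Imm, fromBlocks_mul_Jpm, neg_zero]

end Blocks

section H2

variable {m : ℕ}

abbrev H2Reps (m : ℕ) : Set (Matrix (Fin m ⊕ Fin m) (Fin m ⊕ Fin m) ℝ) :=
  {1, Imm m, Jpm m, Imm m * Jpm m}

lemma commute_or_anticommute_Imm_Jpm_iff (M : Matrix (Fin m ⊕ Fin m) (Fin m ⊕ Fin m) ℝ) :
    ((Commute M (Imm m) ∨ M * Imm m = -(Imm m * M)) ∧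
      (Commute M (Jpm m) ∨ M * Jpm m = -(Jpm m * M))) ↔
      ∃ Y, ∃ Z ∈ H2Reps m, M = fromBlocks Y 0 0 Y * Z := by
  obtain ⟨A, B, C, D, rfl⟩ : ∃ A B C D, M = fromBlocks A B C D :=
    ⟨_, _, _, _, (fromBlocks_toBlocks M).symm⟩
  rw [fromBlocks_commute_Imm_iff, fromBlocks_mul_Imm_eq_neg_iff, fromBlocks_commute_Jpm_iff,
    fromBlocks_mul_Jpm_eq_neg_iff]
  simp only [Set.mem_insert_iff, Set.mem_singleton_iff, exists_eq_or_imp, exists_eq_left, mul_one,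
    fromBlocks_mul_Imm, fromBlocks_mul_Jpm, fromBlocks_zero_zero_mul_Imm_mul_Jpm, neg_zero,
    fromBlocks_inj]
  constructor
  · rintro ⟨⟨hB, hC⟩ | ⟨hA, hD⟩, ⟨hCB, hDA⟩ | ⟨hCB, hDA⟩⟩
    · exact ⟨A, .inl ⟨rfl, hB, hC, hDA⟩⟩
    · exact ⟨D, .inr <| .inl ⟨by simp [hDA], hB, hC, rfl⟩⟩
    · exact ⟨B, .inr <| .inr <| .inl ⟨hA, rfl, hCB, hD⟩⟩
    · exact ⟨C, .inr <| .inr <| .inr ⟨hA, by simp [hCB], rfl, hD⟩⟩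
  · rintro ⟨Y, ⟨rfl, rfl, rfl, rfl⟩ | ⟨rfl, rfl, rfl, rfl⟩ | ⟨rfl, rfl, rfl, rfl⟩ |
      ⟨rfl, rfl, rfl, rfl⟩⟩ <;> simp

lemma Imm_mem_orthogonalGroup : Imm m ∈ orthogonalGroup (Fin m ⊕ Fin m) ℝ := by
  rw [Imm, fromBlocks_zero_mem_orthogonalGroup_iff]
  simp [mem_orthogonalGroup_iff]

lemma Jpm_mem_orthogonalGroup : Jpm m ∈ orthogonalGroup (Fin m ⊕ Fin m) ℝ := by
  simp [Jpm, mem_orthogonalGroup_iff, fromBlocks_transpose, fromBlocks_multiply, ← fromBlocks_one]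

lemma mem_orthogonalGroup_of_mem_H2Reps {Z : Matrix (Fin m ⊕ Fin m) (Fin m ⊕ Fin m) ℝ}
    (hZ : Z ∈ H2Reps m) : Z ∈ orthogonalGroup (Fin m ⊕ Fin m) ℝ := by
  rcases hZ with rfl | rfl | rfl | rfl
  exacts [one_mem _, Imm_mem_orthogonalGroup, Jpm_mem_orthogonalGroup,
    mul_mem Imm_mem_orthogonalGroup Jpm_mem_orthogonalGroup]

lemma mem_orthogonalGroup_of_fromBlocks_mul_mem {Y : Matrix (Fin m) (Fin m) ℝ}
    {Z : Matrix (Fin m ⊕ Fin m) (Fin m ⊕ Fin m) ℝ}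
    (hYZ : fromBlocks Y 0 0 Y * Z ∈ orthogonalGroup (Fin m ⊕ Fin m) ℝ)
    (hZ : Z ∈ orthogonalGroup (Fin m ⊕ Fin m) ℝ) : Y ∈ orthogonalGroup (Fin m) ℝ := by
  have hY : fromBlocks Y 0 0 Y = fromBlocks Y 0 0 Y * Z * star Z := by
    rw [mul_assoc, mem_unitaryGroup_iff.mp hZ, mul_one]
  rw [← and_self (Y ∈ _), ← fromBlocks_zero_mem_orthogonalGroup_iff, hY]
  exact mul_mem hYZ (Unitary.star_mem hZ)

variable (m) in
def ImmOG : OG (Fin m ⊕ Fin m) := ⟨Imm m, Imm_mem_orthogonalGroup⟩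

variable (m) in
def JpmOG : OG (Fin m ⊕ Fin m) := ⟨Jpm m, Jpm_mem_orthogonalGroup⟩

lemma H2_eq_closure :
    H2 m = Subgroup.closure {QuotientGroup.mk (ImmOG m), QuotientGroup.mk (JpmOG m)} := by
  refine congrArg Subgroup.closure (Set.ext fun x => ⟨?_, ?_⟩)
  · rintro ⟨U, rfl, hU | hU⟩
    · exact .inl (congrArg _ (Subtype.ext hU))
    · exact .inr (congrArg _ (Subtype.ext hU))
  · rintro (rfl | rfl)
    exacts [⟨_, rfl, .inl rfl⟩, ⟨_, rfl, .inr rfl⟩]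

lemma mk_mem_centralizer_H2_iff (U : OG (Fin m ⊕ Fin m)) :
    (QuotientGroup.mk U : PO (Fin m ⊕ Fin m)) ∈ Subgroup.centralizer (H2 m : Set _) ↔
      ((Commute (U : Matrix _ _ ℝ) (Imm m) ∨ U * Imm m = -(Imm m * U)) ∧
        (Commute (U : Matrix _ _ ℝ) (Jpm m) ∨ U * Jpm m = -(Jpm m * U))) := by
  simp only [H2_eq_closure, Subgroup.centralizer_closure, Subgroup.mem_centralizer_iff,
    Set.forall_mem_insert, Set.mem_singleton_iff, forall_eq]
  exact and_congr (Commute.symm_iff.trans mk_commute_iff) (Commute.symm_iff.trans mk_commute_iff)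

end H2

theorem centralizer_H2_orthogonal_general (m : ℕ) :
    ((Subgroup.centralizer (H2 m : Set (PO (Fin m ⊕ Fin m)))) :
        Set (PO (Fin m ⊕ Fin m))) =
      {x | ∃ Y : Matrix (Fin m) (Fin m) ℝ, Y ∈ Matrix.orthogonalGroup (Fin m) ℝ ∧
        ∃ Z ∈ ({1, Imm m, Jpm m, Imm m * Jpm m} :
            Set (Matrix (Fin m ⊕ Fin m) (Fin m ⊕ Fin m) ℝ)),
          ∃ U : OG (Fin m ⊕ Fin m),
            (QuotientGroup.mk U : PO (Fin m ⊕ Fin m)) = x ∧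
            (U : Matrix (Fin m ⊕ Fin m) (Fin m ⊕ Fin m) ℝ)
              = Matrix.fromBlocks Y 0 0 Y * Z} := by
  ext x
  constructor
  · obtain ⟨U, rfl⟩ := QuotientGroup.mk_surjective x
    intro hU
    obtain ⟨Y, Z, hZ, hUYZ⟩ :=
      (commute_or_anticommute_Imm_Jpm_iff _).mp ((mk_mem_centralizer_H2_iff U).mp hU)
    have hY := mem_orthogonalGroup_of_fromBlocks_mul_mem (hUYZ ▸ U.2)
      (mem_orthogonalGroup_of_mem_H2Reps hZ)
    exact ⟨Y, hY, Z, hZ, U, rfl, hUYZ⟩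
  · rintro ⟨Y, -, Z, hZ, U, rfl, hUYZ⟩
    exact (mk_mem_centralizer_H2_iff U).mpr
      ((commute_or_anticommute_Imm_Jpm_iff _).mpr ⟨Y, Z, hZ, hUYZ⟩)

/-- The centralizer of `H₂ = ⟨[I_{m,m}], [J'_m]⟩` in `O(2m)/⟨-I⟩` is
`{[diag(Y,Y)·Z] : Y ∈ O(m), Z ∈ {I, I_{m,m}, J'_m, I_{m,m}J'_m}}`, i.e. the internal
product `Δ(O(m)/⟨-I⟩) × H₂`. -/
theorem centralizer_H2_orthogonal (m : ℕ) (hm : 1 ≤ m) :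
    ((Subgroup.centralizer (H2 m : Set (PO (Fin m ⊕ Fin m)))) :
        Set (PO (Fin m ⊕ Fin m))) =
      {x | ∃ Y : Matrix (Fin m) (Fin m) ℝ, Y ∈ Matrix.orthogonalGroup (Fin m) ℝ ∧
        ∃ Z ∈ ({1, Imm m, Jpm m, Imm m * Jpm m} :
            Set (Matrix (Fin m ⊕ Fin m) (Fin m ⊕ Fin m) ℝ)),
          ∃ U : OG (Fin m ⊕ Fin m),
            (QuotientGroup.mk U : PO (Fin m ⊕ Fin m)) = x ∧
            (U : Matrix (Fin m ⊕ Fin m) (Fin m ⊕ Fin m) ℝ)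
              = Matrix.fromBlocks Y 0 0 Y * Z} :=
  centralizer_H2_orthogonal_general m

end
end

section
/- Let F be a finite abelian subgroup of Sp(n)/⟨−I⟩ such that the only X ∈ sp(n) satisfying AXA⁻¹ = X for every A ∈ Sp(n) representing an element of F is X = 0. Then every x ∈ ker m has a representative A ∈ Sp(n) with A² = I_n (equivalently, x is represented by a matrix conjugate in Sp(n) to I_{p,n−p} for some 0 ≤ p ≤ n). -/
open Matrix

noncomputable section

/-- The compact symplectic group `Sp(n)` of `n × n` quaternionic matrices `X` with
`X X* = I`. -/
abbrev SpG (n : ℕ) := unitary (Matrix (Fin n) (Fin n) (Quaternion ℝ))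

/-- `-I` as an element of `Sp(n)`. -/
def negOneSp (n : ℕ) : SpG n :=
  ⟨(-1 : Matrix (Fin n) (Fin n) (Quaternion ℝ)), by
    rw [Unitary.mem_iff]; constructor <;> simp⟩

/-- The central subgroup `⟨-I⟩` of `Sp(n)`. -/
def negSpSG (n : ℕ) : Subgroup (SpG n) := Subgroup.zpowers (negOneSp n)

instance negSpSG_normal (n : ℕ) : (negSpSG n).Normal := by
  constructor
  intro x hx g
  obtain ⟨k, rfl⟩ := Subgroup.mem_zpowers_iff.mp hx
  have h2 : g.val * (g⁻¹ : SpG n).val = 1 := congrArg Subtype.val (mul_inv_cancel g)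
  have hg : g * negOneSp n * g⁻¹ = negOneSp n := by
    apply Subtype.ext
    show g.val * (negOneSp n).val * (g⁻¹ : SpG n).val = (negOneSp n).val
    have hneg : (negOneSp n).val = -1 := rfl
    rw [hneg]
    calc g.val * (-1) * (g⁻¹ : SpG n).val
        = -(g.val * (g⁻¹ : SpG n).val) := by rw [mul_neg_one, neg_mul]
      _ = -1 := by rw [h2]
  have hmap : g * (negOneSp n) ^ k * g⁻¹ = (g * negOneSp n * g⁻¹) ^ k := by
    have := map_zpow (MulAut.conj g) (negOneSp n) k
    simpa [MulAut.conj_apply] using this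
  rw [hmap, hg]
  exact Subgroup.zpow_mem _ (Subgroup.mem_zpowers _) k

/-- The projective symplectic group `Sp(n)/⟨-I⟩`. -/
abbrev PSp (n : ℕ) := SpG n ⧸ negSpSG n

end

/-!
If `x = [A]` lies in `ker m`, then `A` itself commutes with every representative of every
element of `F`, so the skew-Hermitian part `A - A*` lies in `sp(n)^F = 0`. Hence `A = A* = A⁻¹`,
i.e. `A² = I`.
-/

section StarRing

variable {R : Type*} [Ring R] [StarRing R]

theorem sub_star_self_add_star (a : R) : a - star a + star (a - star a) = 0 := by
  rw [star_sub, star_star]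
  abel

namespace Unitary

theorem conj_eq_of_commute {u v : unitary R} (h : Commute u v) :
    (u : R) * v * star (u : R) = v := by
  rw [← coe_star, ← Submonoid.coe_mul, ← Submonoid.coe_mul, h.eq, mul_assoc, mul_star_self,
    mul_one]

theorem conj_sub_star_eq_of_conj_eq {u : unitary R} {a : R}
    (h : (u : R) * a * star (u : R) = a) :
    (u : R) * (a - star a) * star (u : R) = a - star a := by
  have h_star : (u : R) * star a * star (u : R) = star a := by
    simpa only [star_mul, star_star, mul_assoc] using congrArg star h
  rw [mul_sub, sub_mul, h, h_star]

theorem sq_eq_one_of_coe_eq_star {u : unitary R} (h : (u : R) = star (u : R)) : u ^ 2 = 1 := by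
  apply Subtype.ext
  rw [pow_two, Submonoid.coe_mul, OneMemClass.coe_one]
  nth_rewrite 2 [h]
  exact coe_mul_star_self u

end Unitary

end StarRing

theorem ker_pairing_has_involutive_representative_sp_general (n : ℕ)
    (F : Subgroup (PSp n))
    (hcond : ∀ X : Matrix (Fin n) (Fin n) (Quaternion ℝ), X + Xᴴ = 0 →
      (∀ A : SpG n, (QuotientGroup.mk A : PSp n) ∈ F →
        A.val * X * star A.val = X) →
      X = 0) :
    ∀ x ∈ F,
      (∀ y ∈ F, ∀ A B : SpG n,
        (QuotientGroup.mk A : PSp n) = x → (QuotientGroup.mk B : PSp n) = y →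
        (A * B * A⁻¹ * B⁻¹ : SpG n).val = 1) →
      ∃ A : SpG n, (QuotientGroup.mk A : PSp n) = x ∧ A ^ 2 = 1 := by
  intro x _ hker
  obtain ⟨A, rfl⟩ := QuotientGroup.mk_surjective x
  have hA_fixed : ∀ B : SpG n, (B : PSp n) ∈ F → B.val * A.val * star B.val = A.val :=
    fun B hB => Unitary.conj_eq_of_commute
      (commutatorElement_eq_one_iff_mul_comm.mp (Subtype.ext (hker _ hB A B rfl rfl))).symm
  have hskew_zero : A.val - star A.val = 0 :=
    hcond _ (sub_star_self_add_star A.val)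
      fun B hB => Unitary.conj_sub_star_eq_of_conj_eq (hA_fixed B hB)
  exact ⟨A, rfl, Unitary.sq_eq_one_of_coe_eq_star (sub_eq_zero.mp hskew_zero)⟩

/-- If `F` is a finite abelian subgroup of `Sp(n)/⟨-I⟩` with
`sp(n)^F = 0` (here conjugation is `X ↦ A X A⁻¹ = A X A*`), then every element of `ker m`
has a representative `A ∈ Sp(n)` with `A² = I`. -/
theorem ker_pairing_has_involutive_representative_sp (n : ℕ) (hn : 1 ≤ n)
    (F : Subgroup (PSp n))
    (habel : ∀ x ∈ F, ∀ y ∈ F, x * y = y * x)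
    (hfin : (F : Set (PSp n)).Finite)
    (hcond : ∀ X : Matrix (Fin n) (Fin n) (Quaternion ℝ), X + Xᴴ = 0 →
      (∀ A : SpG n, (QuotientGroup.mk A : PSp n) ∈ F →
        A.val * X * star A.val = X) →
      X = 0) :
    ∀ x ∈ F,
      (∀ y ∈ F, ∀ A B : SpG n,
        (QuotientGroup.mk A : PSp n) = x → (QuotientGroup.mk B : PSp n) = y →
        (A * B * A⁻¹ * B⁻¹ : SpG n).val = 1) →
      ∃ A : SpG n, (QuotientGroup.mk A : PSp n) = x ∧ A ^ 2 = 1 :=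
  ker_pairing_has_involutive_representative_sp_general n F hcond
end

section
/- For every n ≥ 1 and every finite abelian subgroup F of Sp(n), there exists a nonzero X ∈ sp(n) with AXA⁻¹ = X for all A ∈ F. (In the language of the paper: Sp(n) has no finite abelian subgroups satisfying the condition dim 𝔤₀^F = dim F.) -/
/-!
Make `ℍⁿ` a complex vector space through right multiplication by `ℂ ⊆ ℍ`; left multiplication
by a quaternionic matrix is then `ℂ`-linear, so the commuting family `F` has a common
eigenvector `v`, with `A v = v c_A` for `c_A ∈ ℂ`, and unitarity of `A` forces `|c_A| = 1`.
The matrix `X = v i v*` is nonzero and skew-Hermitian, and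
`A X A* = v c_A i c̄_A v* = X` because `c_A` commutes with `i`.
-/

open Matrix MulOpposite Quaternion

theorem Module.End.exists_common_eigenvector_of_commute {ι K V : Type*} [Field K]
    [IsAlgClosed K] [AddCommGroup V] [Module K V] [FiniteDimensional K V] [Nontrivial V]
    (f : ι → Module.End K V) (hf : ∀ i j, Commute (f i) (f j)) :
    ∃ v : V, v ≠ 0 ∧ ∀ i, ∃ c : K, f i v = c • v := by
  -- A minimal nonzero common invariant subspace lies in an eigenspace of each `f i`, since its
  -- intersection with such an eigenspace is again a nonzero common invariant subspace.
  let P : Set (Submodule K V) := {W | W ≠ ⊥ ∧ ∀ i, Set.MapsTo (f i) W W}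
  obtain ⟨W, ⟨hW, hWinv⟩, hmin⟩ :=
    wellFounded_lt.has_min P ⟨⊤, top_ne_bot, fun _ _ _ => Submodule.mem_top⟩
  have hW_le_eigenspace : ∀ i, ∃ c : K, W ≤ (f i).eigenspace c := by
    intro i
    have : Nontrivial W := Submodule.nontrivial_iff_ne_bot.mpr hW
    obtain ⟨c, hc⟩ := exists_eigenvalue ((f i).restrict (hWinv i))
    obtain ⟨w, hw⟩ := hc.exists_hasEigenvector
    have hinter : W ⊓ (f i).eigenspace c ∈ P := by
      refine ⟨?_, fun j => (hWinv j).inter_inter (mapsTo_genEigenspace_of_comm (hf i j) c 1)⟩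
      refine (Submodule.ne_bot_iff _).mpr ⟨w, ⟨w.2, ?_⟩, by simpa using hw.2⟩
      exact mem_eigenspace_iff.mpr (congrArg Subtype.val hw.apply_eq_smul)
    exact ⟨c, by_contra fun h => hmin _ hinter (inf_lt_left.mpr h)⟩
  obtain ⟨v, hvW, hv⟩ := Submodule.exists_mem_ne_zero_of_ne_bot hW
  exact ⟨v, hv, fun i => (hW_le_eigenspace i).imp fun c hc => mem_eigenspace_iff.mp (hc hvW)⟩

namespace Matrix

variable {n R : Type*} [Ring R] [StarRing R]

theorem mul_vecMulVec_star_mul_conjTranspose [Fintype n] (A : Matrix n n R) (u v : n → R) :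
    A * vecMulVec u (star v) * Aᴴ = vecMulVec (A *ᵥ u) (star (A *ᵥ v)) := by
  rw [mul_vecMulVec, vecMulVec_mul, star_mulVec]

theorem conjTranspose_vecMulVec_op_smul_star {q : R} (hq : star q = -q) (v : n → R) :
    (vecMulVec (op q • v) (star v))ᴴ = -vecMulVec (op q • v) (star v) := by
  ext k l
  simp [vecMulVec_apply, hq, mul_assoc]

theorem vecMulVec_op_smul_op_smul_star {q c : R} (hqc : Commute q c) (hc : c * star c = 1)
    (v : n → R) :
    vecMulVec (op q • op c • v) (star (op c • v)) = vecMulVec (op q • v) (star v) := by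
  ext k l
  simp only [vecMulVec_apply, Pi.smul_apply, Pi.star_apply, op_smul_eq_mul, star_mul]
  rw [mul_assoc (v k), ← hqc.eq, mul_assoc, mul_assoc, ← mul_assoc c, hc, one_mul, mul_assoc]

theorem star_op_smul_dotProduct_op_smul [Fintype n] (c : R) (v : n → R) :
    star (op c • v) ⬝ᵥ (op c • v) = star c * (star v ⬝ᵥ v) * c := by
  simp only [dotProduct, Pi.smul_apply, Pi.star_apply, op_smul_eq_mul, star_mul,
    Finset.mul_sum, Finset.sum_mul, mul_assoc]

theorem star_mulVec_dotProduct_mulVec_of_mem_unitary [Fintype n] [DecidableEq n]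
    {A : Matrix n n R} (hA : A ∈ unitary (Matrix n n R)) (v : n → R) :
    star (A *ᵥ v) ⬝ᵥ (A *ᵥ v) = star v ⬝ᵥ v := by
  rw [star_mulVec, dotProduct_mulVec, vecMul_vecMul, ← star_eq_conjTranspose,
    Unitary.star_mul_self_of_mem hA, vecMul_one]

end Matrix

theorem Quaternion.star_dotProduct_self {n : Type*} [Fintype n] (v : n → ℍ) :
    star v ⬝ᵥ v = ((∑ k, normSq (v k) : ℝ) : ℍ) := by
  simp only [dotProduct, Pi.star_apply, star_mul_self, ← algebraMap_def, map_sum]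

theorem Quaternion.mul_star_eq_one_of_mulVec_eq_op_smul {n : Type*} [Fintype n]
    [DecidableEq n] {A : Matrix n n ℍ} (hA : A ∈ unitary (Matrix n n ℍ)) {v : n → ℍ}
    (hv : v ≠ 0) {c : ℍ} (hc : A *ᵥ v = op c • v) : c * star c = 1 := by
  obtain ⟨k, hk⟩ := Function.ne_iff.mp hv
  have hpos : 0 < ∑ k, normSq (v k) := Finset.sum_pos' (fun _ _ => normSq_nonneg)
    ⟨k, Finset.mem_univ k, normSq_nonneg.lt_of_ne' (normSq_ne_zero.mpr hk)⟩
  -- `|v|² = |A v|² = c̄ |v|² c = |c|² |v|²`, using that `|v|²` is real, hence central.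
  have hnorm := Matrix.star_mulVec_dotProduct_mulVec_of_mem_unitary hA v
  rw [hc, star_op_smul_dotProduct_op_smul, star_dotProduct_self, mul_assoc, coe_commutes,
    ← mul_assoc, star_mul_self, ← coe_mul] at hnorm
  rw [self_mul_star, ← coe_one, coe_inj]
  exact (mul_eq_right₀ hpos.ne').mp (coe_injective hnorm)

theorem Quaternion.commute_coeComplex (z w : ℂ) : Commute (z : ℍ) w := by
  rw [Commute, SemiconjBy, ← coeComplex_mul, ← coeComplex_mul, mul_comm]

theorem Quaternion.star_coeComplex_I : star (Complex.I : ℍ) = -Complex.I := by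
  ext <;> simp

theorem Quaternion.coeComplex_I_ne_zero : (Complex.I : ℍ) ≠ 0 :=
  fun h => by simpa using congrArg QuaternionAlgebra.imI h

-- `ℂ` acts on the right, so that left multiplication by quaternionic matrices is `ℂ`-linear.
noncomputable instance : Module ℂ ℍ :=
  Module.compHom ℍ (RingHom.toOpposite ofComplex.toRingHom commute_coeComplex)

theorem Quaternion.complex_smul_def (z : ℂ) (q : ℍ) : z • q = op (z : ℍ) • q := rfl

instance : SMulCommClass ℂ ℍ ℍ := ⟨fun z p q => mul_assoc p q z⟩

instance : IsScalarTower ℝ ℂ ℍ :=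
  ⟨fun r z q => by
    simp only [complex_smul_def, op_smul_eq_mul, ← coe_ofComplex, map_smul, mul_smul_comm]⟩

instance : FiniteDimensional ℂ ℍ := Module.Finite.of_restrictScalars_finite ℝ ℂ ℍ

theorem sp_no_finite_abelian_subgroup_with_condition_general (n : ℕ) (hn : 1 ≤ n)
    (F : Subgroup (unitary (Matrix (Fin n) (Fin n) (Quaternion ℝ))))
    (habel : ∀ x ∈ F, ∀ y ∈ F, x * y = y * x) :
    ∃ X : Matrix (Fin n) (Fin n) (Quaternion ℝ), X ≠ 0 ∧ X + Xᴴ = 0 ∧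
      ∀ A ∈ F, A.val * X * star A.val = X := by
  have : Nonempty (Fin n) := ⟨⟨0, hn⟩⟩
  obtain ⟨v, hv, heigen⟩ := Module.End.exists_common_eigenvector_of_commute
    (fun A : F => mulVecBilin ℍ ℂ (A : Matrix (Fin n) (Fin n) ℍ)) fun A B =>
      LinearMap.ext fun w => by
        simp only [Module.End.mul_apply, mulVecBilin_apply, mulVec_mulVec, ← Submonoid.coe_mul,
          habel A A.2 B B.2]
  refine ⟨vecMulVec (op (Complex.I : ℍ) • v) (star v), ?_, ?_, fun A hA => ?_⟩
  · exact vecMulVec_ne_zero (smul_ne_zero ((op_ne_zero_iff _).mpr coeComplex_I_ne_zero) hv)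
      (star_ne_zero.mpr hv)
  · rw [conjTranspose_vecMulVec_op_smul_star star_coeComplex_I, add_neg_cancel]
  · obtain ⟨c, hc⟩ := heigen ⟨A, hA⟩
    change A.val *ᵥ v = op (c : ℍ) • v at hc
    rw [star_eq_conjTranspose, mul_vecMulVec_star_mul_conjTranspose, mulVec_smul, hc]
    exact vecMulVec_op_smul_op_smul_star (commute_coeComplex _ _)
      (mul_star_eq_one_of_mulVec_eq_op_smul A.2 hv hc) v

/-- For every `n ≥ 1` and every finite abelian subgroup `F` of `Sp(n)`,
there is a nonzero `X ∈ sp(n)` with `A X A⁻¹ = X` (i.e. `A X A* = X`) for all `A ∈ F`: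
`Sp(n)` has no finite abelian subgroup satisfying the condition `dim 𝔤₀^F = dim F`. -/
theorem sp_no_finite_abelian_subgroup_with_condition (n : ℕ) (hn : 1 ≤ n)
    (F : Subgroup (unitary (Matrix (Fin n) (Fin n) (Quaternion ℝ))))
    (habel : ∀ x ∈ F, ∀ y ∈ F, x * y = y * x)
    (hfin : (F : Set (unitary (Matrix (Fin n) (Fin n) (Quaternion ℝ)))).Finite) :
    ∃ X : Matrix (Fin n) (Fin n) (Quaternion ℝ), X ≠ 0 ∧ X + Xᴴ = 0 ∧
      ∀ A ∈ F, A.val * X * star A.val = X :=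
  sp_no_finite_abelian_subgroup_with_condition_general n hn F habel
end

section
/- Let F be an abelian subgroup of G = PU(n) ⋊ ⟨τ₀⟩ that is not contained in PU(n), and let H_F = F ∩ PU(n). Then the commutator pairing m of the abelian subgroup H_F of PU(n) takes values in {1, −1}, and for every u ∈ F \ H_F one has u² ∈ ker m = {x ∈ H_F : m(x,y) = 1 for all y ∈ H_F}. -/
open Matrix

noncomputable section

variable (ι : Type) [Fintype ι] [DecidableEq ι]

variable {ι}

lemma conjTranspose_map_conj (A : Matrix ι ι ℂ) :
    (A.map (starRingEnd ℂ))ᴴ = Aᵀ := by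
  ext i j
  simp [Matrix.conjTranspose_apply, Matrix.map_apply]

/-- Entrywise complex conjugation on the unitary group. -/
def conjUG (A : UG ι) : UG ι :=
  ⟨(A : Matrix ι ι ℂ).map (starRingEnd ℂ), by
    rw [Matrix.mem_unitaryGroup_iff]
    have h1 : ((A : Matrix ι ι ℂ) * star (A : Matrix ι ι ℂ)).map (starRingEnd ℂ)
        = (A : Matrix ι ι ℂ).map (starRingEnd ℂ)
          * (star (A : Matrix ι ι ℂ)).map (starRingEnd ℂ) :=
      Matrix.map_mul
    have hA : (A : Matrix ι ι ℂ) * star (A : Matrix ι ι ℂ) = 1 :=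
      Matrix.mem_unitaryGroup_iff.mp A.2
    rw [hA] at h1
    have h2 : ((1 : Matrix ι ι ℂ)).map (starRingEnd ℂ) = 1 := by
      ext i j; simp [Matrix.map_apply, Matrix.one_apply, apply_ite]
    have h3 : star ((A : Matrix ι ι ℂ).map (starRingEnd ℂ))
        = (star (A : Matrix ι ι ℂ)).map (starRingEnd ℂ) := by
      ext i j
      simp [Matrix.star_eq_conjTranspose, Matrix.conjTranspose_apply, Matrix.map_apply]
    rw [h3, ← h1, h2]⟩

@[simp] lemma conjUG_conjUG (A : UG ι) : conjUG (conjUG A) = A := by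
  apply Subtype.ext
  show ((A : Matrix ι ι ℂ).map (starRingEnd ℂ)).map (starRingEnd ℂ) = (A : Matrix ι ι ℂ)
  ext i j
  simp [Matrix.map_apply]

/-- Entrywise complex conjugation as an automorphism of the unitary group. -/
def conjUGE : UG ι ≃* UG ι where
  toFun := conjUG
  invFun := conjUG
  left_inv := conjUG_conjUG
  right_inv := conjUG_conjUG
  map_mul' A B := by
    apply Subtype.ext
    show ((A * B : UG ι) : Matrix ι ι ℂ).map (starRingEnd ℂ)
        = (A : Matrix ι ι ℂ).map (starRingEnd ℂ) * (B : Matrix ι ι ℂ).map (starRingEnd ℂ)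
    rw [Matrix.UnitaryGroup.mul_val]
    exact Matrix.map_mul

variable (ι)

lemma scalarSG_le_comap_conjUGE :
    scalarSG ι ≤ (scalarSG ι).comap (conjUGE : UG ι ≃* UG ι).toMonoidHom := by
  rintro A ⟨a, ha, hA⟩
  refine ⟨starRingEnd ℂ a, by simpa using ha, ?_⟩
  show ((A : Matrix ι ι ℂ).map (starRingEnd ℂ)) = _
  rw [hA]
  ext i j
  by_cases h : i = j <;>
    simp [Matrix.map_apply, Matrix.smul_apply, Matrix.one_apply, h]

/-- The complex conjugation automorphism `τ₀` of `PU(ι)`. -/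
def tauPU : PU ι ≃* PU ι where
  toFun := QuotientGroup.map (scalarSG ι) (scalarSG ι) (conjUGE : UG ι ≃* UG ι).toMonoidHom
    (scalarSG_le_comap_conjUGE ι)
  invFun := QuotientGroup.map (scalarSG ι) (scalarSG ι) (conjUGE : UG ι ≃* UG ι).toMonoidHom
    (scalarSG_le_comap_conjUGE ι)
  left_inv := by
    intro x
    induction x using QuotientGroup.induction_on with
    | H A => rw [QuotientGroup.map_mk, QuotientGroup.map_mk]
             exact congrArg _ (conjUG_conjUG A)
  right_inv := by
    intro x
    induction x using QuotientGroup.induction_on with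
    | H A => rw [QuotientGroup.map_mk, QuotientGroup.map_mk]
             exact congrArg _ (conjUG_conjUG A)
  map_mul' := map_mul _


end

noncomputable section

variable (ι : Type) [Fintype ι] [DecidableEq ι]

lemma tauPU_mul_tauPU : (tauPU ι) * (tauPU ι) = 1 :=
  DFunLike.ext _ _ fun x => by
    rw [MulAut.mul_apply, MulAut.one_apply]
    exact (tauPU ι).left_inv x

/-- The action of `⟨τ₀⟩ ≅ ℤ/2ℤ` on `PU(ι)` by complex conjugation. -/
def actPU : Multiplicative (ZMod 2) →* MulAut (PU ι) where
  toFun x := (tauPU ι) ^ (Multiplicative.toAdd x).val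
  map_one' := by
    show (tauPU ι) ^ (Multiplicative.toAdd (1 : Multiplicative (ZMod 2))).val = 1
    simp
  map_mul' a b := by
    show (tauPU ι) ^ (Multiplicative.toAdd (a * b)).val
        = (tauPU ι) ^ (Multiplicative.toAdd a).val * (tauPU ι) ^ (Multiplicative.toAdd b).val
    have h2 : (tauPU ι) ^ 2 = 1 := by rw [pow_two]; exact tauPU_mul_tauPU ι
    have hab : (Multiplicative.toAdd (a * b))
        = Multiplicative.toAdd a + Multiplicative.toAdd b := rfl
    rw [hab, ZMod.val_add, ← pow_eq_pow_mod _ h2, pow_add]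

/-- The group `PU(ι) ⋊ ⟨τ₀⟩`. -/
abbrev GA := SemidirectProduct (PU ι) (Multiplicative (ZMod 2)) (actPU ι)

end

/-!
Fix `u ∈ F` outside `PU(n)` with a lift `U ∈ U(n)`. That `u` commutes with `x = [A] ∈ H_F` says
`Ā = U⁻¹ A U s` for a scalar `s`. Commutators ignore central factors, so conjugating
`⁅A, B⁆` entrywise gives `U⁻¹ ⁅A, B⁆ U = ⁅A, B⁆`: the scalar `⁅A, B⁆` is real of modulus one.
For `u² = [U Ū]`, conjugating `B̄ = U⁻¹ B U s` once more gives
`B = (U Ū)⁻¹ B (U Ū) · s s̄` with `s s̄ = |s|² = 1`, so `U Ū` commutes with every lift of `H_F`.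
-/

open scoped commutatorElement

section CentralCommutator

variable {G : Type*} [Group G]

lemma commutatorElement_mul_mem_center_left {s : G} (hs : s ∈ Subgroup.center G) (a b : G) :
    ⁅a * s, b⁆ = ⁅a, b⁆ := by
  rw [commutatorElement_mul_left_eq_conj_mul, commutatorElement_eq_one_iff_commute.mpr
    (Subgroup.mem_center_iff.mp hs b).symm, mul_one, mul_inv_cancel, one_mul]

lemma commutatorElement_mul_mem_center_right {t : G} (ht : t ∈ Subgroup.center G) (a b : G) :
    ⁅a, b * t⁆ = ⁅a, b⁆ := by
  rw [commutatorElement_mul_right_eq_mul_conj, commutatorElement_eq_one_iff_commute.mpr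
    (Subgroup.mem_center_iff.mp ht a), mul_one, mul_inv_cancel_right]

lemma commutatorElement_eq_of_mk_eq {N : Subgroup G} [N.Normal] (hN : N ≤ Subgroup.center G)
    {a a' b b' : G} (ha : (a : G ⧸ N) = a') (hb : (b : G ⧸ N) = b') :
    ⁅a, b⁆ = ⁅a', b'⁆ := by
  have ha' : a' = a * (a⁻¹ * a') := by group
  have hb' : b' = b * (b⁻¹ * b') := by group
  rw [ha', hb', commutatorElement_mul_mem_center_left (hN (QuotientGroup.eq.mp ha)),
    commutatorElement_mul_mem_center_right (hN (QuotientGroup.eq.mp hb))]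

lemma commutatorElement_mem_of_commute_mk {N : Subgroup G} [N.Normal] {a b : G}
    (h : Commute (a : G ⧸ N) b) : ⁅a, b⁆ ∈ N := by
  rw [← QuotientGroup.eq_one_iff, ← QuotientGroup.mk'_apply, map_commutatorElement,
    commutatorElement_eq_one_iff_commute]
  exact h

lemma map_commutatorElement_eq_self_of_map_eq_conj_mul {φ : G →* G} {u a b s t : G}
    (ha : φ a = u⁻¹ * a * u * s) (hb : φ b = u⁻¹ * b * u * t)
    (hs : s ∈ Subgroup.center G) (ht : t ∈ Subgroup.center G)
    (hab : ⁅a, b⁆ ∈ Subgroup.center G) : φ ⁅a, b⁆ = ⁅a, b⁆ := by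
  rw [map_commutatorElement, ha, hb, commutatorElement_mul_mem_center_left hs,
    commutatorElement_mul_mem_center_right ht]
  have hconj := conjugate_commutatorElement a b u⁻¹
  rw [inv_inv] at hconj
  rw [← hconj, Subgroup.mem_center_iff.mp hab u⁻¹, inv_mul_cancel_right]

lemma commute_mul_map_of_map_eq_conj_mul {φ : G →* G} {u b s : G} (hφ : φ (φ b) = b)
    (hb : φ b = u⁻¹ * b * u * s) (hs : s ∈ Subgroup.center G) (hs' : s * φ s = 1) :
    Commute (u * φ u) b := by
  have hsu : φ u * s = s * φ u := Subgroup.mem_center_iff.mp hs (φ u)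
  have hb_conj : b = (u * φ u)⁻¹ * b * (u * φ u) :=
    calc b = φ (φ b) := hφ.symm
      _ = (φ u)⁻¹ * (u⁻¹ * b * u * s) * φ u * φ s := by
        rw [hb, map_mul, map_mul, map_mul, map_inv, hb]
      _ = (φ u)⁻¹ * u⁻¹ * b * u * (s * φ u) * φ s := by group
      _ = (u * φ u)⁻¹ * b * (u * φ u) * (s * φ s) := by rw [← hsu]; group
      _ = (u * φ u)⁻¹ * b * (u * φ u) := by rw [hs', mul_one]
  rw [Commute, SemiconjBy]
  nth_rewrite 1 [hb_conj]
  group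

end CentralCommutator

section Unitary

variable {ι : Type} [Fintype ι] [DecidableEq ι]

lemma scalarSG_le_center : scalarSG ι ≤ Subgroup.center (UG ι) := by
  rintro s ⟨c, -, hs⟩
  refine Subgroup.mem_center_iff.mpr fun g => Subtype.ext ?_
  simp [hs]

lemma tauPU_mk (A : UG ι) : tauPU ι A = (conjUGE A : PU ι) := rfl

lemma conjUGE_val_of_val_eq_smul_one {s : UG ι} {c : ℂ} (hs : (s : Matrix ι ι ℂ) = c • 1) :
    (conjUGE s : Matrix ι ι ℂ) = starRingEnd ℂ c • 1 := by
  change (s : Matrix ι ι ℂ).map (starRingEnd ℂ) = _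
  rw [hs, Matrix.map_smul' _ _ _ (map_mul _), Matrix.map_one _ (map_zero _) (map_one _)]

lemma mul_conjUGE_of_mem_scalarSG {s : UG ι} (hs : s ∈ scalarSG ι) : s * conjUGE s = 1 := by
  obtain ⟨c, hc, hsc⟩ := hs
  refine Subtype.ext ?_
  rw [Matrix.UnitaryGroup.mul_val, conjUGE_val_of_val_eq_smul_one hsc, hsc, smul_mul_smul_comm,
    Complex.mul_conj', hc]
  simp

lemma val_eq_one_or_neg_one_of_conjUGE_eq {s : UG ι} (hs : s ∈ scalarSG ι)
    (hfix : conjUGE s = s) : (s : Matrix ι ι ℂ) = 1 ∨ (s : Matrix ι ι ℂ) = -1 := by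
  obtain ⟨c, hc, hsc⟩ := hs
  by_cases h1 : (1 : Matrix ι ι ℂ) = 0
  · exact Or.inl (by rw [hsc, h1, smul_zero])
  have hreal : starRingEnd ℂ c = c := by
    refine smul_left_injective ℂ h1 ?_
    change starRingEnd ℂ c • 1 = c • 1
    rw [← conjUGE_val_of_val_eq_smul_one hsc, hfix, hsc]
  obtain ⟨r, rfl⟩ := Complex.conj_eq_iff_real.mp hreal
  rw [Complex.norm_real, Real.norm_eq_abs] at hc
  rcases abs_eq_abs.mp (hc.trans abs_one.symm) with rfl | rfl <;> simp [hsc]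

lemma exists_conjUGE_eq_conj_mul {U A : UG ι} (h : (U : PU ι) * tauPU ι A = A * U) :
    ∃ s ∈ scalarSG ι, conjUGE A = U⁻¹ * A * U * s := by
  rw [tauPU_mk, ← QuotientGroup.mk_mul, ← QuotientGroup.mk_mul] at h
  exact ⟨_, QuotientGroup.eq.mp h.symm, by group⟩

theorem commutatorElement_val_eq_one_or_neg_one {U A B : UG ι}
    (hA : (U : PU ι) * tauPU ι A = A * U) (hB : (U : PU ι) * tauPU ι B = B * U)
    (hAB : Commute (A : PU ι) B) :
    ((⁅A, B⁆ : UG ι) : Matrix ι ι ℂ) = 1 ∨ ((⁅A, B⁆ : UG ι) : Matrix ι ι ℂ) = -1 := by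
  obtain ⟨s, hs, hsA⟩ := exists_conjUGE_eq_conj_mul hA
  obtain ⟨t, ht, htB⟩ := exists_conjUGE_eq_conj_mul hB
  have hABs : ⁅A, B⁆ ∈ scalarSG ι := commutatorElement_mem_of_commute_mk hAB
  exact val_eq_one_or_neg_one_of_conjUGE_eq hABs <|
    map_commutatorElement_eq_self_of_map_eq_conj_mul (φ := conjUGE.toMonoidHom) hsA htB
      (scalarSG_le_center hs) (scalarSG_le_center ht) (scalarSG_le_center hABs)

theorem commute_mul_conjUGE {U B : UG ι} (hB : (U : PU ι) * tauPU ι B = B * U) :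
    Commute (U * conjUGE U) B := by
  obtain ⟨s, hs, hsB⟩ := exists_conjUGE_eq_conj_mul hB
  exact commute_mul_map_of_map_eq_conj_mul (φ := conjUGE.toMonoidHom) (conjUG_conjUG B) hsB
    (scalarSG_le_center hs) (mul_conjUGE_of_mem_scalarSG hs)

end Unitary

section SemidirectProduct

variable {ι : Type} [Fintype ι] [DecidableEq ι]

lemma actPU_of_ne_one {t : Multiplicative (ZMod 2)} (ht : t ≠ 1) : actPU ι t = tauPU ι := by
  have ht' : Multiplicative.toAdd t = 1 := by revert t; decide
  change tauPU ι ^ (Multiplicative.toAdd t).val = _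
  rw [ht', ZMod.val_one, pow_one]

lemma GA.sq_right (u : GA ι) : (u ^ 2).right = 1 := by
  rw [pow_two, SemidirectProduct.mul_right]
  generalize u.right = t
  revert t; decide

lemma GA.sq_left_of_right_ne_one {u : GA ι} (hu : u.right ≠ 1) :
    (u ^ 2).left = u.left * tauPU ι u.left := by
  rw [pow_two, SemidirectProduct.mul_left, actPU_of_ne_one hu]

lemma GA.left_mul_tauPU_of_commute {u x : GA ι} (h : Commute u x) (hu : u.right ≠ 1)
    (hx : x.right = 1) : u.left * tauPU ι x.left = x.left * u.left := by
  simpa [SemidirectProduct.mul_left, hx, actPU_of_ne_one hu] using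
    congrArg SemidirectProduct.left h.eq

lemma GA.commute_left_of_commute {x y : GA ι} (h : Commute x y) (hx : x.right = 1)
    (hy : y.right = 1) : Commute x.left y.left := by
  simpa [Commute, SemiconjBy, SemidirectProduct.mul_left, hx, hy] using
    congrArg SemidirectProduct.left h.eq

end SemidirectProduct

theorem twisted_pairing_values_general (n : ℕ)
    (F : Subgroup (GA (Fin n)))
    (habel : ∀ x ∈ F, ∀ y ∈ F, x * y = y * x)
    (hout : ∃ u ∈ F, u.right ≠ 1) :
    (∀ x ∈ F, x.right = 1 → ∀ y ∈ F, y.right = 1 →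
      ∀ A B : UG (Fin n),
        (QuotientGroup.mk A : PU (Fin n)) = x.left →
        (QuotientGroup.mk B : PU (Fin n)) = y.left →
        ((A * B * A⁻¹ * B⁻¹ : UG (Fin n)) : Matrix (Fin n) (Fin n) ℂ)
            = (1 : Matrix (Fin n) (Fin n) ℂ) ∨
        ((A * B * A⁻¹ * B⁻¹ : UG (Fin n)) : Matrix (Fin n) (Fin n) ℂ)
            = -(1 : Matrix (Fin n) (Fin n) ℂ)) ∧
    (∀ u ∈ F, u.right ≠ 1 →
      (u ^ 2).right = 1 ∧
      (∀ y ∈ F, y.right = 1 →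
        ∀ A B : UG (Fin n),
          (QuotientGroup.mk A : PU (Fin n)) = (u ^ 2).left →
          (QuotientGroup.mk B : PU (Fin n)) = y.left →
          ((A * B * A⁻¹ * B⁻¹ : UG (Fin n)) : Matrix (Fin n) (Fin n) ℂ)
              = (1 : Matrix (Fin n) (Fin n) ℂ))) := by
  refine ⟨fun x hx hxr y hy hyr A B hA hB => ?_,
    fun u hu hur => ⟨GA.sq_right u, fun y hy hyr A B hA hB => ?_⟩⟩
  · obtain ⟨u, hu, hur⟩ := hout
    obtain ⟨U, hU⟩ := QuotientGroup.mk_surjective u.left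
    have twisted : ∀ z ∈ F, z.right = 1 → ∀ C : UG (Fin n), (C : PU (Fin n)) = z.left →
        (U : PU (Fin n)) * tauPU (Fin n) C = C * U := by
      rintro z hz hzr C hC
      rw [hU, hC]
      exact GA.left_mul_tauPU_of_commute (habel u hu z hz) hur hzr
    have hAB : Commute (A : PU (Fin n)) B := by
      rw [hA, hB]
      exact GA.commute_left_of_commute (habel x hx y hy) hxr hyr
    exact commutatorElement_val_eq_one_or_neg_one (twisted x hx hxr A hA)
      (twisted y hy hyr B hB) hAB
  · obtain ⟨U, hU⟩ := QuotientGroup.mk_surjective u.left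
    have hW : (A : PU (Fin n)) = (U * conjUGE U : UG (Fin n)) := by
      rw [hA, GA.sq_left_of_right_ne_one hur, ← hU]
      rfl
    have hBU : (U : PU (Fin n)) * tauPU (Fin n) B = B * U := by
      rw [hU, hB]
      exact GA.left_mul_tauPU_of_commute (habel u hu y hy) hur hyr
    have hAB : ⁅A, B⁆ = 1 := by
      rw [commutatorElement_eq_of_mk_eq scalarSG_le_center hW rfl,
        commutatorElement_eq_one_iff_commute]
      exact commute_mul_conjUGE hBU
    exact congrArg Subtype.val hAB

/-- For an abelian subgroup `F` of `G = PU(n) ⋊ ⟨τ₀⟩` not contained in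
`PU(n)`, the commutator pairing `m` of `H_F = F ∩ PU(n)` takes values in `{1, -1}`, and
`u² ∈ ker m` for every `u ∈ F \ H_F`. -/
theorem twisted_pairing_values (n : ℕ) (hn : 1 ≤ n)
    (F : Subgroup (GA (Fin n)))
    (habel : ∀ x ∈ F, ∀ y ∈ F, x * y = y * x)
    (hout : ∃ u ∈ F, u.right ≠ 1) :
    (∀ x ∈ F, x.right = 1 → ∀ y ∈ F, y.right = 1 →
      ∀ A B : UG (Fin n),
        (QuotientGroup.mk A : PU (Fin n)) = x.left →
        (QuotientGroup.mk B : PU (Fin n)) = y.left →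
        ((A * B * A⁻¹ * B⁻¹ : UG (Fin n)) : Matrix (Fin n) (Fin n) ℂ)
            = (1 : Matrix (Fin n) (Fin n) ℂ) ∨
        ((A * B * A⁻¹ * B⁻¹ : UG (Fin n)) : Matrix (Fin n) (Fin n) ℂ)
            = -(1 : Matrix (Fin n) (Fin n) ℂ)) ∧
    (∀ u ∈ F, u.right ≠ 1 →
      (u ^ 2).right = 1 ∧
      (∀ y ∈ F, y.right = 1 →
        ∀ A B : UG (Fin n),
          (QuotientGroup.mk A : PU (Fin n)) = (u ^ 2).left →
          (QuotientGroup.mk B : PU (Fin n)) = y.left →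
          ((A * B * A⁻¹ * B⁻¹ : UG (Fin n)) : Matrix (Fin n) (Fin n) ℂ)
              = (1 : Matrix (Fin n) (Fin n) ℂ))) :=
  twisted_pairing_values_general n F habel hout
end
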